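/- arXiv:2409.01598 — 9 statements merged into one kernel-verified Lean document; each statement's English description precedes it below -/
import Mathlib

section
/- Let G₁ = (V₁, E₁) and G₂ = (V₂, E₂) be two reaction graphs embedded in ℝ^d (finite simple directed graphs with vertex sets in ℝ^d and no isolated vertices). If both G₁ and G₂ are endotactic, then their union G₁ ∪ G₂ = (V₁ ∪ V₂, E₁ ∪ E₂) is endotactic. -/
open Matrix Finset
open scoped Matrix Classical

abbrev Vec (d : ℕ) := Fin d → ℝ
abbrev Edge (d : ℕ) := Vec d × Vec d

/-- Sources of edges whose reaction vector is not orthogonal to `u`. -/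
def srcU {d : ℕ} (E : Finset (Edge d)) (u : Vec d) : Set (Vec d) :=
  {y | ∃ y', (y, y') ∈ E ∧ (y' - y) ⬝ᵥ u ≠ 0}

/-- `G` is `u`-endotactic: no `u`-endotacticity violating reaction. -/
def uEndotactic {d : ℕ} (E : Finset (Edge d)) (u : Vec d) : Prop :=
  ¬ ∃ y y', (y, y') ∈ E ∧ 0 < (y' - y) ⬝ᵥ u ∧ ∀ z ∈ srcU E u, z ⬝ᵥ u ≤ y ⬝ᵥ u

def Endotactic {d : ℕ} (E : Finset (Edge d)) : Prop := ∀ u : Vec d, uEndotactic E u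

/-- Reachability by a directed path. -/
def Reach {d : ℕ} (E : Finset (Edge d)) : Vec d → Vec d → Prop :=
  Relation.ReflTransGen (fun a b => (a, b) ∈ E)

def IsEig {d : ℕ} (A : Matrix (Fin d) (Fin d) ℝ) (μ : ℂ) : Prop :=
  ∃ v : Fin d → ℂ, v ≠ 0 ∧ (A.map Complex.ofReal).mulVec v = μ • v

theorem srcU_mono {d : ℕ} {E F : Finset (Edge d)} (h : E ⊆ F) (u : Vec d) :
    srcU E u ⊆ srcU F u :=
  fun _ ⟨y', hy', hne⟩ => ⟨y', h hy', hne⟩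

theorem uEndotactic_union {d : ℕ} {E₁ E₂ : Finset (Edge d)} {u : Vec d}
    (h₁ : uEndotactic E₁ u) (h₂ : uEndotactic E₂ u) : uEndotactic (E₁ ∪ E₂) u := by
  rintro ⟨y, y', hmem, hpos, hmax⟩
  rcases mem_union.1 hmem with h | h
  · exact h₁ ⟨y, y', h, hpos, fun z hz => hmax z (srcU_mono subset_union_left u hz)⟩
  · exact h₂ ⟨y, y', h, hpos, fun z hz => hmax z (srcU_mono subset_union_right u hz)⟩

theorem stmt4_general {d : ℕ} (E₁ E₂ : Finset (Edge d))
    (h₁ : Endotactic E₁) (h₂ : Endotactic E₂) :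
    Endotactic (E₁ ∪ E₂) :=
  fun u => uEndotactic_union (h₁ u) (h₂ u)

/-- The union (joint) of two endotactic reaction graphs is endotactic. -/
theorem stmt4 {d : ℕ} (E₁ E₂ : Finset (Edge d))
    (hsimple₁ : ∀ e ∈ E₁, e.1 ≠ e.2) (hsimple₂ : ∀ e ∈ E₂, e.1 ≠ e.2)
    (h₁ : Endotactic E₁) (h₂ : Endotactic E₂) :
    Endotactic (E₁ ∪ E₂) :=
  stmt4_general E₁ E₂ h₁ h₂
end

section
/- Let G = (V, E) be a reaction graph embedded in ℝ^d, w ∈ ℝ^d, and suppose (y, y') ∈ E is a w-endotacticity-violating reaction (i.e., (y'−y)·w > 0, y is w-maximal among sources of edges whose reaction vector is not orthogonal to w). Then for every vertex z ∈ V reachable from y' by a directed path, z·w = y'·w and z is not a source of any edge whose reaction vector is non-orthogonal to w. In particular, y and y' lie in different strongly connected components of G. -/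
open Matrix Finset
open scoped Matrix Classical

/-! Above every `w`-value attained on `srcU E w`, all edges are orthogonal to `w`, so the level
set of `w` through such a vertex is closed under reachability. A violating reaction
`(y, y')` lifts `y'` strictly above `y`, hence above all of `srcU E w`, and `y` is then
unreachable from `y'` because it lies on a lower level. -/

lemma sub_dotProduct_eq_zero_of_srcU_le {d : ℕ} {E : Finset (Edge d)} {w x x' : Vec d} {m : ℝ}
    (hmax : ∀ z ∈ srcU E w, z ⬝ᵥ w ≤ m) (hx : m < x ⬝ᵥ w) (hxx' : (x, x') ∈ E) :
    (x' - x) ⬝ᵥ w = 0 := by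
  by_contra hne
  exact (hmax x ⟨x', hxx', hne⟩).not_gt hx

lemma Reach.dotProduct_eq_of_srcU_le {d : ℕ} {E : Finset (Edge d)} {w x z : Vec d} {m : ℝ}
    (hmax : ∀ z ∈ srcU E w, z ⬝ᵥ w ≤ m) (hx : m < x ⬝ᵥ w) (hxz : Reach E x z) :
    z ⬝ᵥ w = x ⬝ᵥ w := by
  induction hxz with
  | refl => rfl
  | tail _ hbc ih =>
    have hstep := sub_dotProduct_eq_zero_of_srcU_le hmax (ih ▸ hx) hbc
    rw [sub_dotProduct, sub_eq_zero] at hstep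
    rw [hstep, ih]

theorem stmt6_general {d : ℕ} (E : Finset (Edge d)) (w : Vec d) (y y' : Vec d)
    (hpos : 0 < (y' - y) ⬝ᵥ w)
    (hmax : ∀ z ∈ srcU E w, z ⬝ᵥ w ≤ y ⬝ᵥ w) :
    (∀ z, Reach E y' z →
      z ⬝ᵥ w = y' ⬝ᵥ w ∧ ∀ z', (z, z') ∈ E → (z' - z) ⬝ᵥ w = 0) ∧
    ¬ Reach E y' y := by
  have hlt : y ⬝ᵥ w < y' ⬝ᵥ w := by rwa [sub_dotProduct, sub_pos] at hpos
  have hlevel : ∀ z, Reach E y' z → z ⬝ᵥ w = y' ⬝ᵥ w :=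
    fun z hz => hz.dotProduct_eq_of_srcU_le hmax hlt
  refine ⟨fun z hz => ⟨hlevel z hz, fun z' hzz' => ?_⟩, fun hy => ?_⟩
  · exact sub_dotProduct_eq_zero_of_srcU_le hmax (hlevel z hz ▸ hlt) hzz'
  · exact hlt.ne (hlevel y hy)

/-- If `(y, y')` is a `w`-endotacticity violating reaction, then every vertex `z`
reachable from `y'` satisfies `z·w = y'·w` and is not a source of any edge with
reaction vector non-orthogonal to `w`; in particular `y` is not reachable from
`y'`, so `y` and `y'` lie in different strongly connected components. -/
theorem stmt6 {d : ℕ} (E : Finset (Edge d)) (w : Vec d) (y y' : Vec d)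
    (hE : (y, y') ∈ E) (hpos : 0 < (y' - y) ⬝ᵥ w)
    (hmax : ∀ z ∈ srcU E w, z ⬝ᵥ w ≤ y ⬝ᵥ w) :
    (∀ z, Reach E y' z →
      z ⬝ᵥ w = y' ⬝ᵥ w ∧ ∀ z', (z, z') ∈ E → (z' - z) ⬝ᵥ w = 0) ∧
    ¬ Reach E y' y :=
  stmt6_general E w y y' hpos hmax
end

section
/- Let G be a reaction graph embedded in ℝ^d such that every edge of G^lir (the subgraph of edges joining distinct strongly connected components) has the property that its reaction vector is parallel to the reaction vector of some other edge of G emanating from its target: for every edge (y, y') ∈ E^lir there exists an edge (y', y'') ∈ E with y'−y parallel to y''−y'. Then G is endotactic. -/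
open Matrix Finset
open scoped Matrix Classical

/-- Two vertices lie in the same strongly connected component. -/
def SCCeq {d : ℕ} (E : Finset (Edge d)) (a b : Vec d) : Prop :=
  Reach E a b ∧ Reach E b a

/-
Suppose the edge `y → y'` violates `u`-endotacticity: `⟨y' - y, u⟩ > 0` while every source of an
edge not orthogonal to `u` lies at level at most `⟨y, u⟩`. Above that level no edge changes
`⟨·, u⟩`, so nothing reachable from `y'` comes back down to `y`: the edge joins distinct strongly
connected components. The parallel edge out of `y'` is then not orthogonal to `u`, making `y'`
itself such a source, although it lies strictly above `y`.
-/

lemma lt_dotProduct_of_reach {d : ℕ} {E : Finset (Edge d)} {u : Vec d} {t : ℝ}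
    (hsrc : ∀ z ∈ srcU E u, z ⬝ᵥ u ≤ t) {a b : Vec d} (hab : Reach E a b)
    (ha : t < a ⬝ᵥ u) : t < b ⬝ᵥ u := by
  induction hab with
  | refl => exact ha
  | @tail b c _ hbc ih =>
    have hflat : (c - b) ⬝ᵥ u = 0 := by
      by_contra hne
      exact (hsrc b ⟨c, hbc, hne⟩).not_gt ih
    rw [sub_dotProduct, sub_eq_zero] at hflat
    rwa [hflat]

lemma mem_srcU_of_parallel {d : ℕ} {E : Finset (Edge d)} {u y y' y'' : Vec d} {c : ℝ}
    (hE : (y', y'') ∈ E) (hc : c ≠ 0) (hpar : y'' - y' = c • (y' - y))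
    (hu : (y' - y) ⬝ᵥ u ≠ 0) : y' ∈ srcU E u :=
  ⟨y'', hE, by rw [hpar, smul_dotProduct, smul_eq_mul]; exact mul_ne_zero hc hu⟩

theorem stmt8_general {d : ℕ} (E : Finset (Edge d))
    (h : ∀ e ∈ E, ¬ SCCeq E e.1 e.2 →
      ∃ y'' : Vec d, (e.2, y'') ∈ E ∧ ∃ c : ℝ, c ≠ 0 ∧ y'' - e.2 = c • (e.2 - e.1)) :
    Endotactic E := by
  rintro u ⟨y, y', hE, hpos, hmax⟩
  have hlt : y ⬝ᵥ u < y' ⬝ᵥ u := by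
    rw [sub_dotProduct] at hpos
    linarith
  by_cases hscc : SCCeq E y y'
  · exact lt_irrefl _ (lt_dotProduct_of_reach hmax hscc.2 hlt)
  · obtain ⟨y'', hE', c, hc, hpar⟩ := h (y, y') hE hscc
    exact (hmax y' (mem_srcU_of_parallel hE' hc hpar hpos.ne')).not_gt hlt

/-- If every edge joining distinct strongly connected components has its
reaction vector parallel to the reaction vector of some edge emanating from its
target, then the reaction graph is endotactic. -/
theorem stmt8 {d : ℕ} (E : Finset (Edge d)) (hsimple : ∀ e ∈ E, e.1 ≠ e.2)
    (h : ∀ e ∈ E, ¬ SCCeq E e.1 e.2 →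
      ∃ y'' : Vec d, (e.2, y'') ∈ E ∧ ∃ c : ℝ, c ≠ 0 ∧ y'' - e.2 = c • (e.2 - e.1)) :
    Endotactic E :=
  stmt8_general E h
end

section
/- Every weakly reversible reaction graph is endotactic. -/
open Matrix Finset
open scoped Matrix Classical

section

variable {d : ℕ} {E : Finset (Edge d)} {u : Vec d}

theorem dotProduct_eq_of_mem_of_notMem_srcU {a b : Vec d} (hab : (a, b) ∈ E)
    (ha : a ∉ srcU E u) : b ⬝ᵥ u = a ⬝ᵥ u := by
  by_contra hne
  exact ha ⟨b, hab, by rwa [sub_dotProduct, sub_ne_zero]⟩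

/-- No source of an edge that is not orthogonal to `u` lies above level `c`, so every edge starting
above level `c` stays at its level. -/
theorem Reach.lt_dotProduct {c : ℝ} (hmax : ∀ z ∈ srcU E u, z ⬝ᵥ u ≤ c) {a b : Vec d}
    (hab : Reach E a b) (ha : c < a ⬝ᵥ u) : c < b ⬝ᵥ u := by
  induction hab with
  | refl => exact ha
  | @tail b b' _ hbb' ih =>
    have hb : b ∉ srcU E u := fun hb => (hmax b hb).not_gt ih
    rwa [dotProduct_eq_of_mem_of_notMem_srcU hbb' hb]

end

theorem stmt9_general {d : ℕ} (E : Finset (Edge d))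
    (hwr : ∀ e ∈ E, Reach E e.2 e.1) :
    Endotactic E := by
  rintro u ⟨y, y', hE, hpos, hmax⟩
  have hlt : y ⬝ᵥ u < y' ⬝ᵥ u := by rwa [sub_dotProduct, sub_pos] at hpos
  exact lt_irrefl _ ((hwr _ hE).lt_dotProduct hmax hlt)

/-- Every weakly reversible reaction graph is endotactic. -/
theorem stmt9 {d : ℕ} (E : Finset (Edge d)) (hsimple : ∀ e ∈ E, e.1 ≠ e.2)
    (hwr : ∀ e ∈ E, Reach E e.2 e.1) :
    Endotactic E :=
  stmt9_general E hwr
end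

section
/- Let G = (V, E) be a nonempty first order reaction graph embedded in ℕ₀^d (every source y of an edge satisfies ‖y‖₁ ≤ 1) with no redundant species, and assume G is both 𝟙-endotactic and (−𝟙)-endotactic where 𝟙 = (1,...,1). Then the following are equivalent: (1) the zero complex 0 is not a vertex of G; (2) (y'−y)·𝟙 = 0 for every edge (y,y') (conservation of total molecularity); (3) every source of G has ℓ₁-norm equal to the maximal ℓ₁-norm of sources (homogeneity). Moreover in this case d > 1 and every vertex of G is a standard basis vector e_i. -/
/-!
Every source of a first order graph is a natural vector of ℓ₁-norm `0` or `1`. If all sources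
have the same norm, a reaction that raised (lowered) the total molecularity would start at a
source maximising `y ⬝ᵥ 𝟙` (`y ⬝ᵥ (-𝟙)`), which the `𝟙`- and `(-𝟙)`-endotactic conditions forbid;
so homogeneity gives conservation. Conversely, under conservation the source `0` could only
react to the natural vector of norm `0`, i.e. to itself, so all sources and hence all vertices
have norm `1` and are standard basis vectors; the endpoints of any edge then are two distinct
`eᵢ`, forcing `d > 1`. If `0` is not a vertex, all sources have norm `1`, which is homogeneity.
-/

open Matrix Finset
open scoped Matrix Classical

def InV {d : ℕ} (E : Finset (Edge d)) (y : Vec d) : Prop :=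
  ∃ e ∈ E, e.1 = y ∨ e.2 = y

def IsSource {d : ℕ} (E : Finset (Edge d)) (y : Vec d) : Prop :=
  ∃ y', (y, y') ∈ E

def IsNatVec {d : ℕ} (y : Vec d) : Prop := ∀ i, ∃ n : ℕ, y i = n

namespace IsNatVec
variable {d : ℕ} {y : Vec d}

lemma exists_eq_natCast (hy : IsNatVec y) : ∃ f : Fin d → ℕ, y = fun i => (f i : ℝ) := by
  choose f hf using hy
  exact ⟨f, funext hf⟩

lemma sum_eq_zero_or_eq_one (hy : IsNatVec y) (hs : ∑ i, y i ≤ 1) :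
    ∑ i, y i = 0 ∨ ∑ i, y i = 1 := by
  obtain ⟨f, rfl⟩ := hy.exists_eq_natCast
  beta_reduce at hs ⊢
  norm_cast at hs ⊢
  omega

lemma eq_zero_of_sum_eq_zero (hy : IsNatVec y) (hs : ∑ i, y i = 0) : y = 0 := by
  obtain ⟨f, rfl⟩ := hy.exists_eq_natCast
  beta_reduce at hs
  norm_cast at hs
  funext i
  simp [Finset.sum_eq_zero_iff.mp hs i (mem_univ i)]

lemma eq_single_of_sum_eq_one (hy : IsNatVec y) (hs : ∑ i, y i = 1) :
    ∃ i, y = Pi.single i 1 := by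
  obtain ⟨f, rfl⟩ := hy.exists_eq_natCast
  beta_reduce at hs
  norm_cast at hs
  obtain ⟨i, hi⟩ := (Finsupp.sum_eq_one_iff (Finsupp.equivFunOnFinite.symm f)).mp
    (by rwa [Finsupp.sum_fintype _ _ (fun _ => rfl)])
  refine ⟨i, funext fun j => ?_⟩
  have := congrArg (· j) hi
  simp only [Finsupp.equivFunOnFinite_symm_apply_apply] at this
  simp [this, Pi.single_apply, Finsupp.single_apply, eq_comm]

end IsNatVec

section ReactionGraph

variable {d : ℕ} {E : Finset (Edge d)}

def Conservative (E : Finset (Edge d)) : Prop := ∀ e ∈ E, ∑ i, (e.2 i - e.1 i) = 0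

def Homogeneous (E : Finset (Edge d)) : Prop :=
  ∀ y z, IsSource E y → IsSource E z → ∑ i, y i = ∑ i, z i

lemma IsSource.inV {y : Vec d} (hy : IsSource E y) : InV E y :=
  let ⟨y', hy'⟩ := hy; ⟨(y, y'), hy', Or.inl rfl⟩

lemma uEndotactic.dotProduct_sub_nonpos {u : Vec d} (h : uEndotactic E u)
    (hu : ∀ y z, IsSource E y → IsSource E z → y ⬝ᵥ u = z ⬝ᵥ u)
    {y y' : Vec d} (he : (y, y') ∈ E) : (y' - y) ⬝ᵥ u ≤ 0 :=
  not_lt.mp fun hpos => h ⟨y, y', he, hpos, fun z ⟨z', hz, _⟩ =>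
    (hu z y ⟨z', hz⟩ ⟨y', he⟩).le⟩

lemma dotProduct_const_one (v : Vec d) : v ⬝ᵥ (fun _ => (1 : ℝ)) = ∑ i, v i :=
  dotProduct_one v

lemma dotProduct_const_neg_one (v : Vec d) : v ⬝ᵥ (fun _ => (-1 : ℝ)) = -∑ i, v i := by
  rw [← dotProduct_one, ← dotProduct_neg]
  rfl

lemma Homogeneous.conservative (hplus : uEndotactic E (fun _ => (1 : ℝ)))
    (hminus : uEndotactic E (fun _ => (-1 : ℝ))) (hh : Homogeneous E) : Conservative E := by
  intro e he
  have hle := hplus.dotProduct_sub_nonpos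
    (fun y z hy hz => by rw [dotProduct_const_one, dotProduct_const_one, hh y z hy hz]) he
  have hge := hminus.dotProduct_sub_nonpos
    (fun y z hy hz => by rw [dotProduct_const_neg_one, dotProduct_const_neg_one, hh y z hy hz]) he
  rw [dotProduct_const_one] at hle
  rw [dotProduct_const_neg_one] at hge
  simp only [Pi.sub_apply] at hle hge
  linarith

lemma Conservative.sum_target_eq (hc : Conservative E) {y y' : Vec d} (he : (y, y') ∈ E) :
    ∑ i, y' i = ∑ i, y i := by
  have := hc _ he
  rw [Finset.sum_sub_distrib] at this
  linarith

variable (hnat : ∀ y, InV E y → IsNatVec y) (hfo : ∀ y, IsSource E y → ∑ i, y i ≤ 1)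
include hnat hfo

lemma Conservative.sum_source_eq_one (hsimple : ∀ e ∈ E, e.1 ≠ e.2) (hc : Conservative E)
    {y : Vec d} (hy : IsSource E y) : ∑ i, y i = 1 := by
  refine ((hnat y hy.inV).sum_eq_zero_or_eq_one (hfo y hy)).resolve_left fun h0 => ?_
  obtain ⟨y', he⟩ := hy
  have hy0 : y = 0 := (hnat y ⟨_, he, Or.inl rfl⟩).eq_zero_of_sum_eq_zero h0
  have hy'0 : y' = 0 :=
    (hnat y' ⟨_, he, Or.inr rfl⟩).eq_zero_of_sum_eq_zero (by rw [hc.sum_target_eq he, h0])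
  exact hsimple _ he (hy0.trans hy'0.symm)

lemma Conservative.sum_vertex_eq_one (hsimple : ∀ e ∈ E, e.1 ≠ e.2) (hc : Conservative E)
    {y : Vec d} (hy : InV E y) : ∑ i, y i = 1 := by
  obtain ⟨⟨a, b⟩, he, rfl | rfl⟩ := hy
  · exact hc.sum_source_eq_one hnat hfo hsimple ⟨b, he⟩
  · rw [hc.sum_target_eq he]
    exact hc.sum_source_eq_one hnat hfo hsimple ⟨_, he⟩

lemma Conservative.homogeneous (hsimple : ∀ e ∈ E, e.1 ≠ e.2) (hc : Conservative E) :
    Homogeneous E := fun y z hy hz => by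
  rw [hc.sum_source_eq_one hnat hfo hsimple hy, hc.sum_source_eq_one hnat hfo hsimple hz]

lemma Conservative.not_inV_zero (hsimple : ∀ e ∈ E, e.1 ≠ e.2) (hc : Conservative E) :
    ¬ InV E 0 := fun h0 => by
  simpa using hc.sum_vertex_eq_one hnat hfo hsimple h0

lemma homogeneous_of_not_inV_zero (h0 : ¬ InV E 0) : Homogeneous E := by
  have hsrc : ∀ y, IsSource E y → ∑ i, y i = 1 := fun y hy =>
    ((hnat y hy.inV).sum_eq_zero_or_eq_one (hfo y hy)).resolve_left fun hs =>
      h0 ((hnat y hy.inV).eq_zero_of_sum_eq_zero hs ▸ hy.inV)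
  exact fun y z hy hz => by rw [hsrc y hy, hsrc z hz]

end ReactionGraph

theorem stmt10_general {d : ℕ} (E : Finset (Edge d))
    (hne : E.Nonempty)
    (hsimple : ∀ e ∈ E, e.1 ≠ e.2)
    (hnat : ∀ y, InV E y → ∀ i, ∃ n : ℕ, y i = (n : ℝ))
    (hfo : ∀ y, IsSource E y → ∑ i, y i ≤ 1)
    (hplus : uEndotactic E (fun _ => (1 : ℝ)))
    (hminus : uEndotactic E (fun _ => (-1 : ℝ))) :
    (¬ InV E (0 : Vec d) ↔ ∀ e ∈ E, ∑ i, (e.2 i - e.1 i) = 0) ∧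
    ((∀ e ∈ E, ∑ i, (e.2 i - e.1 i) = 0) ↔
      (∀ y z, IsSource E y → IsSource E z → ∑ i, y i = ∑ i, z i)) ∧
    (¬ InV E (0 : Vec d) →
      1 < d ∧ ∀ y, InV E y → ∃ i : Fin d, y = Pi.single i 1) := by
  have hcons_of_not_inV_zero : ¬ InV E 0 → Conservative E := fun h0 =>
    (homogeneous_of_not_inV_zero hnat hfo h0).conservative hplus hminus
  refine ⟨⟨hcons_of_not_inV_zero, fun hc => Conservative.not_inV_zero hnat hfo hsimple hc⟩,
    ⟨fun hc => Conservative.homogeneous hnat hfo hsimple hc,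
      fun hh => Homogeneous.conservative hplus hminus hh⟩, fun h0 => ?_⟩
  have hbasis : ∀ y, InV E y → ∃ i : Fin d, y = Pi.single i 1 := fun y hy =>
    IsNatVec.eq_single_of_sum_eq_one (hnat y hy)
      ((hcons_of_not_inV_zero h0).sum_vertex_eq_one hnat hfo hsimple hy)
  refine ⟨?_, hbasis⟩
  obtain ⟨⟨y, y'⟩, he⟩ := hne
  obtain ⟨i, rfl⟩ := hbasis y ⟨_, he, Or.inl rfl⟩
  obtain ⟨j, rfl⟩ := hbasis y' ⟨_, he, Or.inr rfl⟩
  have hij : i ≠ j := fun hij => hsimple _ he (by rw [hij])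
  exact Fin.nontrivial_iff_two_le.mp (nontrivial_of_ne i j hij)

/-- For a nonempty first order reaction graph in `ℕ₀^d` with no redundant
species which is both `𝟙`- and `(−𝟙)`-endotactic, the following are
equivalent: (1) `0` is not a vertex; (2) every reaction conserves total
molecularity; (3) the graph is homogeneous (all sources have equal `ℓ₁`-norm);
and in that case `d > 1` and every vertex is a standard basis vector. -/
theorem stmt10 {d : ℕ} (E : Finset (Edge d))
    (hne : E.Nonempty)
    (hsimple : ∀ e ∈ E, e.1 ≠ e.2)
    (hnat : ∀ y, InV E y → ∀ i, ∃ n : ℕ, y i = (n : ℝ))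
    (hfo : ∀ y, IsSource E y → ∑ i, y i ≤ 1)
    (hnored : ∀ i : Fin d, ∃ e ∈ E, e.2 i ≠ e.1 i)
    (hplus : uEndotactic E (fun _ => (1 : ℝ)))
    (hminus : uEndotactic E (fun _ => (-1 : ℝ))) :
    (¬ InV E (0 : Vec d) ↔ ∀ e ∈ E, ∑ i, (e.2 i - e.1 i) = 0) ∧
    ((∀ e ∈ E, ∑ i, (e.2 i - e.1 i) = 0) ↔
      (∀ y z, IsSource E y → IsSource E z → ∑ i, y i = ∑ i, z i)) ∧
    (¬ InV E (0 : Vec d) →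
      1 < d ∧ ∀ y, InV E y → ∃ i : Fin d, y = Pi.single i 1) :=
  stmt10_general E hne hsimple hnat hfo hplus hminus
end

section
/- Let G be a first order reaction graph embedded in ℕ₀^d with no redundant species, and suppose G is A-endotactic where A = {±Σ_{i∈I} e_i : ∅ ≠ I ⊆ [d]}. Then the set of sources of G satisfies {e_1, ..., e_d} ⊆ V₊ ⊆ {0, e_1, ..., e_d}, and V₊ = {0, e_1, ..., e_d} if and only if 0 is a vertex of G. -/
open Matrix Finset
open scoped Matrix Classical

/-- `G` is `𝒜`-endotactic for `𝒜 = {± Σ_{i ∈ I} e_i : ∅ ≠ I ⊆ [d]}`. -/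
def AEndotactic {d : ℕ} (E : Finset (Edge d)) : Prop :=
  ∀ I : Finset (Fin d), I.Nonempty →
    uEndotactic E (∑ i ∈ I, (Pi.single i 1 : Vec d)) ∧
    uEndotactic E (-∑ i ∈ I, (Pi.single i 1 : Vec d))

/-!
Every source has nonnegative integer coordinates summing to at most one, so it is `0` or some
`e_i`. If species `i` changes along an edge `y → y'`, either `y_i > y'_i ≥ 0`, which forces
`y = e_i`, or the edge increases `⟨·, e_i⟩`, and `e_i`-endotacticity yields a source `z` with
`z_i > y_i ≥ 0`, i.e. `z = e_i`. If `0` is a vertex but not a source, it is the target of an edge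
`e_j → 0`, which increases `⟨·, -𝟙⟩`; then `-𝟙`-endotacticity yields a source with coordinate sum
below one, which can only be `0`.
-/

lemma eq_zero_or_eq_single_of_natCast_of_sum_le_one {d : ℕ} {y : Vec d}
    (hnat : ∀ i, ∃ n : ℕ, y i = n) (hsum : ∑ i, y i ≤ 1) :
    y = 0 ∨ ∃ i, y = Pi.single i 1 := by
  have hnonneg : ∀ i, 0 ≤ y i := fun i => by
    obtain ⟨n, hn⟩ := hnat i
    exact hn ▸ n.cast_nonneg
  by_cases hy : y = 0
  · exact .inl hy
  obtain ⟨i, hi⟩ := Function.ne_iff.mp hy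
  have hone : 1 ≤ y i := by
    obtain ⟨n, hn⟩ := hnat i
    rw [hn, Pi.zero_apply, Nat.cast_ne_zero] at hi
    exact hn ▸ Nat.one_le_cast.mpr (Nat.one_le_iff_ne_zero.mpr hi)
  have hsplit := Finset.add_sum_erase Finset.univ y (Finset.mem_univ i)
  have hrest : ∑ j ∈ Finset.univ.erase i, y j = 0 := by
    linarith [Finset.sum_nonneg fun j (_ : j ∈ Finset.univ.erase i) => hnonneg j]
  have hyi : y i = 1 := by linarith
  rw [Finset.sum_eq_zero_iff_of_nonneg fun j _ => hnonneg j] at hrest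
  refine .inr ⟨i, funext fun j => ?_⟩
  rcases eq_or_ne j i with rfl | hji
  · rwa [Pi.single_eq_same]
  · rw [Pi.single_eq_of_ne hji]
    exact hrest j (by simp [hji])

section FirstOrderSources

variable {d : ℕ} {y : Vec d}

lemma eq_single_of_apply_pos (hy : y = 0 ∨ ∃ j, y = Pi.single j 1) {i : Fin d}
    (hi : 0 < y i) : y = Pi.single i 1 := by
  obtain rfl | ⟨j, rfl⟩ := hy
  · simp at hi
  · rcases eq_or_ne i j with rfl | hij
    · rfl
    · simp [Pi.single_eq_of_ne hij] at hi

lemma eq_zero_of_sum_lt_one (hy : y = 0 ∨ ∃ j, y = Pi.single j 1)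
    (hsum : ∑ i, y i < 1) : y = 0 := by
  obtain rfl | ⟨j, rfl⟩ := hy
  · rfl
  · simp at hsum

end FirstOrderSources

section Endotactic

variable {d : ℕ} {E : Finset (Edge d)}

lemma uEndotactic.exists_isSource_lt {u : Vec d} (h : uEndotactic E u) {y y' : Vec d}
    (hE : (y, y') ∈ E) (hpos : 0 < (y' - y) ⬝ᵥ u) :
    ∃ z, IsSource E z ∧ y ⬝ᵥ u < z ⬝ᵥ u := by
  by_contra! hmax
  exact h ⟨y, y', hE, hpos, fun z ⟨z', hz, _⟩ => hmax z ⟨z', hz⟩⟩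

lemma AEndotactic.single (hA : AEndotactic E) (i : Fin d) :
    uEndotactic E (Pi.single i 1) := by
  simpa using (hA {i} (Finset.singleton_nonempty i)).1

lemma AEndotactic.neg_one [Nonempty (Fin d)] (hA : AEndotactic E) : uEndotactic E (-1) := by
  have hsum : ∑ i, (Pi.single i 1 : Vec d) = 1 := Finset.univ_sum_single 1
  simpa only [hsum] using (hA Finset.univ Finset.univ_nonempty).2

variable (hsrc : ∀ y, IsSource E y → y = 0 ∨ ∃ j, y = Pi.single j 1)
include hsrc

lemma isSource_zero_of_inV (hsimple : ∀ e ∈ E, e.1 ≠ e.2) (hA : AEndotactic E)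
    (h0 : InV E 0) : IsSource E 0 := by
  obtain ⟨⟨y, y'⟩, hE, rfl | rfl⟩ := h0
  · exact ⟨y', hE⟩
  obtain ⟨j, rfl⟩ := (hsrc y ⟨0, hE⟩).resolve_left (hsimple _ hE)
  have : Nonempty (Fin d) := ⟨j⟩
  obtain ⟨z, hz, hlt⟩ := hA.neg_one.exists_isSource_lt hE (by simp [dotProduct_neg, dotProduct_one])
  simp [dotProduct_neg, dotProduct_one] at hlt
  exact eq_zero_of_sum_lt_one (hsrc z hz) hlt ▸ hz

variable (hnat : ∀ y, InV E y → ∀ i, ∃ n : ℕ, y i = (n : ℝ))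
include hnat

lemma isSource_single_of_uEndotactic {i : Fin d} (hmove : ∃ e ∈ E, e.2 i ≠ e.1 i)
    (hu : uEndotactic E (Pi.single i 1)) : IsSource E (Pi.single i 1) := by
  obtain ⟨⟨y, y'⟩, hE, hne⟩ := hmove
  have hnonneg : ∀ v, InV E v → 0 ≤ v i := fun v hv => by
    obtain ⟨n, hn⟩ := hnat v hv i
    exact hn ▸ n.cast_nonneg
  rcases hne.lt_or_gt with hlt | hgt
  · have : 0 < y i := (hnonneg y' ⟨_, hE, .inr rfl⟩).trans_lt hlt
    exact eq_single_of_apply_pos (hsrc y ⟨y', hE⟩) this ▸ ⟨y', hE⟩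
  · obtain ⟨z, hz, hlt⟩ := hu.exists_isSource_lt hE (by simpa [dotProduct_single_one])
    rw [dotProduct_single_one, dotProduct_single_one] at hlt
    have : 0 < z i := (hnonneg y ⟨_, hE, .inl rfl⟩).trans_lt hlt
    exact eq_single_of_apply_pos (hsrc z hz) this ▸ hz

end Endotactic

/-- For an `𝒜`-endotactic first order reaction graph with no redundant
species, the sources satisfy `{e_1,…,e_d} ⊆ V₊ ⊆ {0, e_1,…,e_d}`, and
`V₊ = {0, e_1,…,e_d}` iff `0` is a vertex. -/
theorem stmt11 {d : ℕ} (E : Finset (Edge d))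
    (hsimple : ∀ e ∈ E, e.1 ≠ e.2)
    (hnat : ∀ y, InV E y → ∀ i, ∃ n : ℕ, y i = (n : ℝ))
    (hfo : ∀ y, IsSource E y → ∑ i, y i ≤ 1)
    (hnored : ∀ i : Fin d, ∃ e ∈ E, e.2 i ≠ e.1 i)
    (hA : AEndotactic E) :
    (∀ i : Fin d, IsSource E (Pi.single i 1)) ∧
    (∀ y, IsSource E y → y = 0 ∨ ∃ i : Fin d, y = Pi.single i 1) ∧
    (IsSource E (0 : Vec d) ↔ InV E (0 : Vec d)) := by
  have hsrc : ∀ y, IsSource E y → y = 0 ∨ ∃ i : Fin d, y = Pi.single i 1 :=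
    fun y hy@⟨y', hE⟩ =>
      eq_zero_or_eq_single_of_natCast_of_sum_le_one (hnat y ⟨_, hE, .inl rfl⟩) (hfo y hy)
  refine ⟨fun i => isSource_single_of_uEndotactic hsrc hnat (hnored i) (hA.single i), hsrc,
    fun ⟨y', hE⟩ => ⟨_, hE, .inl rfl⟩, isSource_zero_of_inV hsrc hsimple hA⟩
end

section
/- Let G be a first order reaction graph embedded in ℕ₀^d (with no redundant species) that is A-endotactic for A = {±Σ_{i∈I} e_i : ∅ ≠ I ⊆ [d]}. Let G⁰ be the weakly connected component of G containing the zero complex (empty if 0 ∉ V) and G• = G \ G⁰. Then G⁰ and G• have disjoint sets of species, G• is weakly reversible, monomolecular (all vertices of ℓ₁-norm 1) with deficiency zero, and if G⁰ ≠ ∅ then G⁰ is strongly endotactic; consequently G is endotactic. -/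
open Matrix Finset
open scoped Matrix Classical

/-- Reachability by an undirected path. -/
def WReach {d : ℕ} (E : Finset (Edge d)) : Vec d → Vec d → Prop :=
  Relation.ReflTransGen (fun a b => (a, b) ∈ E ∨ (b, a) ∈ E)

noncomputable def vertexFinset {d : ℕ} (E : Finset (Edge d)) : Finset (Vec d) :=
  E.image Prod.fst ∪ E.image Prod.snd

/-- The strongly connected component of `y`, as a finset of vertices. -/
noncomputable def sccClass {d : ℕ} (E : Finset (Edge d)) (y : Vec d) : Finset (Vec d) :=
  (vertexFinset E).filter (fun z => SCCeq E y z)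

/-- The number of strongly connected components containing at least two
vertices. -/
noncomputable def numNontrivialSCC {d : ℕ} (E : Finset (Edge d)) : ℕ :=
  (((vertexFinset E).image (sccClass E)).filter (fun C => 2 ≤ C.card)).card

def stoichSpan (d : ℕ) (E : Finset (Edge d)) : Submodule ℝ (Vec d) :=
  Submodule.span ℝ {v | ∃ e ∈ E, v = e.2 - e.1}

def DeficiencyZero {d : ℕ} (E : Finset (Edge d)) : Prop :=
  (vertexFinset E).card = Module.finrank ℝ (stoichSpan d E) + numNontrivialSCC E

def WeaklyReversible {d : ℕ} (E : Finset (Edge d)) : Prop :=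
  ∀ e ∈ E, Reach E e.2 e.1

/-- `G` is strongly endotactic. -/
def StronglyEndotactic {d : ℕ} (E : Finset (Edge d)) : Prop :=
  ∀ u : Vec d, (∃ e ∈ E, (e.2 - e.1) ⬝ᵥ u ≠ 0) →
    uEndotactic E u ∧ ∃ y ∈ srcU E u, ∀ z, IsSource E z → z ⬝ᵥ u ≤ y ⬝ᵥ u

/-! Every source of `G` is `0` or a unit vector `e_k`. Applying `𝒜`-endotacticity with
`u = ±𝟙_T` to a nonempty set `T` of species shows that `T` is closed under outgoing reactions
(each `e_k`, `k ∈ T`, reacts only to some `e_l`, `l ∈ T`) if and only if it is closed under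
incoming ones (every reaction producing a `T`-species starts at some `e_k`, `k ∈ T`); the complexes
involving such a `T` then form a union of weak components avoiding `0`, so no species of `T`
occurs in `G⁰`.
The species reachable from a unit vector outside `G⁰` form such a set: this separates the species
and makes `G•` weakly reversible. For `G⁰` and a direction `u`, the species of `G⁰` on which `u`
is maximal (if this maximum is positive) or negative (otherwise) cannot form such a set, which
produces the maximal source required for strong endotacticity. Deficiency zero holds for every
weakly reversible graph on unit vectors, and `G` is endotactic since a violating reaction of `G•`
could be undone along a path of `G•`. -/

section FirstOrderGraphs

variable {d : ℕ}

section NaturalVectors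

lemma coord_nonneg_of_nat {y : Vec d} (hy : ∀ i, ∃ n : ℕ, y i = n) (i : Fin d) : 0 ≤ y i := by
  obtain ⟨n, hn⟩ := hy i
  rw [hn]
  positivity

lemma one_le_coord_of_nat {y : Vec d} (hy : ∀ i, ∃ n : ℕ, y i = n) {i : Fin d} (hi : y i ≠ 0) :
    1 ≤ y i := by
  obtain ⟨n, hn⟩ := hy i
  rw [hn] at hi ⊢
  exact Nat.one_le_cast.2 (Nat.pos_of_ne_zero (by exact_mod_cast hi))

lemma eq_zero_or_eq_single_of_sum_le_one {y : Vec d} (hy : ∀ i, ∃ n : ℕ, y i = n)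
    (h : ∑ i, y i ≤ 1) : y = 0 ∨ ∃ k, y = Pi.single k 1 := by
  by_cases hy0 : y = 0
  · exact Or.inl hy0
  obtain ⟨k, hk⟩ : ∃ k, y k ≠ 0 := by
    by_contra! h
    exact hy0 (funext h)
  have hnonneg : ∀ i ∈ univ, 0 ≤ y i := fun i _ => coord_nonneg_of_nat hy i
  have hk1 := one_le_coord_of_nat hy hk
  refine Or.inr ⟨k, funext fun j => ?_⟩
  rcases eq_or_ne j k with rfl | hjk
  · have := (single_le_sum hnonneg (mem_univ j)).trans h
    simp only [Pi.single_eq_same]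
    linarith
  · have := (add_le_sum hnonneg (mem_univ j) (mem_univ k) hjk).trans h
    simp only [Pi.single_eq_of_ne hjk]
    linarith [hnonneg j (mem_univ j)]

lemma sum_pos_of_nat {y : Vec d} (hy : ∀ i, ∃ n : ℕ, y i = n) {T : Finset (Fin d)} {i : Fin d}
    (hi : i ∈ T) (hyi : y i ≠ 0) : 0 < ∑ j ∈ T, y j :=
  sum_pos' (fun j _ => coord_nonneg_of_nat hy j)
    ⟨i, hi, zero_lt_one.trans_le (one_le_coord_of_nat hy hyi)⟩

lemma sum_single_one (k : Fin d) (T : Finset (Fin d)) :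
    ∑ i ∈ T, (Pi.single k 1 : Vec d) i = if k ∈ T then 1 else 0 :=
  sum_pi_single' k 1 T

lemma eq_of_single_one_apply_ne_zero {k i : Fin d} (h : (Pi.single k 1 : Vec d) i ≠ 0) :
    k = i := by
  by_contra hki
  simp [Ne.symm hki] at h

lemma single_one_injective : Function.Injective (fun k : Fin d => (Pi.single k 1 : Vec d)) :=
  fun k l h => eq_of_single_one_apply_ne_zero (by simp [h])

lemma dotProduct_sum_single_one (v : Vec d) (I : Finset (Fin d)) :
    v ⬝ᵥ ∑ i ∈ I, (Pi.single i 1 : Vec d) = ∑ i ∈ I, v i := by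
  simp [dotProduct_sum, dotProduct_single]

end NaturalVectors

section Endotacticity

variable {E : Finset (Edge d)} {I : Finset (Fin d)} {y y' : Vec d}

lemma AEndotactic.exists_source_gt (hA : AEndotactic E) (hI : I.Nonempty) (he : (y, y') ∈ E)
    (hlt : ∑ i ∈ I, y i < ∑ i ∈ I, y' i) :
    ∃ z w, (z, w) ∈ E ∧ ∑ i ∈ I, w i ≠ ∑ i ∈ I, z i ∧ ∑ i ∈ I, y i < ∑ i ∈ I, z i := by
  by_contra! h
  refine (hA I hI).1 ⟨y, y', he, ?_, fun z ⟨w, hw, hne⟩ => ?_⟩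
  · rw [sub_dotProduct, dotProduct_sum_single_one, dotProduct_sum_single_one]
    linarith
  · rw [sub_dotProduct, dotProduct_sum_single_one, dotProduct_sum_single_one, sub_ne_zero] at hne
    rw [dotProduct_sum_single_one, dotProduct_sum_single_one]
    exact h z w hw hne

lemma AEndotactic.exists_source_lt (hA : AEndotactic E) (hI : I.Nonempty) (he : (y, y') ∈ E)
    (hlt : ∑ i ∈ I, y' i < ∑ i ∈ I, y i) :
    ∃ z w, (z, w) ∈ E ∧ ∑ i ∈ I, w i ≠ ∑ i ∈ I, z i ∧ ∑ i ∈ I, z i < ∑ i ∈ I, y i := by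
  by_contra! h
  refine (hA I hI).2 ⟨y, y', he, ?_, fun z ⟨w, hw, hne⟩ => ?_⟩
  · rw [dotProduct_neg, sub_dotProduct, dotProduct_sum_single_one, dotProduct_sum_single_one]
    linarith
  · rw [dotProduct_neg, sub_dotProduct, dotProduct_sum_single_one, dotProduct_sum_single_one,
      neg_ne_zero, sub_ne_zero] at hne
    rw [dotProduct_neg, dotProduct_neg, dotProduct_sum_single_one, dotProduct_sum_single_one,
      neg_le_neg_iff]
    exact h z w hw hne

lemma Reach.exists_edge_of_lt {f : Vec d → ℝ} {c : ℝ} {a b : Vec d} (h : Reach E a b)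
    (ha : c < f a) (hb : f b ≤ c) : ∃ z w, (z, w) ∈ E ∧ c < f z ∧ f w ≤ c := by
  induction h with
  | refl => exact absurd ha hb.not_gt
  | @tail x b _ hxb ih =>
    by_cases hx : c < f x
    · exact ⟨x, b, hxb, hx, hb⟩
    · exact ih (not_lt.1 hx)

end Endotacticity

structure IsFirstOrderAEndotactic (E : Finset (Edge d)) : Prop where
  natural : ∀ y, InV E y → ∀ i, ∃ n : ℕ, y i = n
  firstOrder : ∀ y, IsSource E y → ∑ i, y i ≤ 1
  aEndotactic : AEndotactic E

namespace IsFirstOrderAEndotactic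

variable {E : Finset (Edge d)} {y y' : Vec d}

lemma natural_fst (hG : IsFirstOrderAEndotactic E) (he : (y, y') ∈ E) :
    ∀ i, ∃ n : ℕ, y i = n :=
  hG.natural y ⟨_, he, Or.inl rfl⟩

lemma natural_snd (hG : IsFirstOrderAEndotactic E) (he : (y, y') ∈ E) :
    ∀ i, ∃ n : ℕ, y' i = n :=
  hG.natural y' ⟨_, he, Or.inr rfl⟩

lemma source_eq_zero_or_single (hG : IsFirstOrderAEndotactic E) (he : (y, y') ∈ E) :
    y = 0 ∨ ∃ k, y = Pi.single k 1 :=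
  eq_zero_or_eq_single_of_sum_le_one (hG.natural_fst he) (hG.firstOrder y ⟨y', he⟩)

lemma sum_target_le_one (hG : IsFirstOrderAEndotactic E) {k : Fin d}
    (he : (Pi.single k 1, y') ∈ E) : ∑ i, y' i ≤ 1 := by
  by_contra! h
  obtain ⟨z, w, hzw, -, hz⟩ := hG.aEndotactic.exists_source_gt ⟨k, mem_univ k⟩ he
    (by rwa [sum_single_one, if_pos (mem_univ k)])
  rw [sum_single_one, if_pos (mem_univ k)] at hz
  linarith [hG.firstOrder z ⟨w, hzw⟩]

lemma target_eq_zero_or_single (hG : IsFirstOrderAEndotactic E) {k : Fin d}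
    (he : (Pi.single k 1, y') ∈ E) : y' = 0 ∨ ∃ l, y' = Pi.single l 1 :=
  eq_zero_or_eq_single_of_sum_le_one (hG.natural_snd he) (hG.sum_target_le_one he)

end IsFirstOrderAEndotactic

section Components

variable {E : Finset (Edge d)} {a b : Vec d} {e : Edge d}

noncomputable def zeroComponent (E : Finset (Edge d)) : Finset (Edge d) :=
  E.filter (fun e => WReach E 0 e.1)

noncomputable def otherComponents (E : Finset (Edge d)) : Finset (Edge d) :=
  E \ zeroComponent E

def IsSpeciesOf (F : Finset (Edge d)) (i : Fin d) : Prop :=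
  ∃ e ∈ F, e.1 i ≠ 0 ∨ e.2 i ≠ 0

lemma mem_zeroComponent : e ∈ zeroComponent E ↔ e ∈ E ∧ WReach E 0 e.1 := mem_filter

lemma mem_otherComponents : e ∈ otherComponents E ↔ e ∈ E ∧ ¬ WReach E 0 e.1 := by
  rw [otherComponents, mem_sdiff, mem_zeroComponent]
  tauto

lemma WReach.symm (h : WReach E a b) : WReach E b a := by
  induction h with
  | refl => exact .refl
  | tail _ hbc ih => exact .head (Or.symm hbc) ih

lemma Reach.wReach (h : Reach E a b) : WReach E a b :=
  Relation.ReflTransGen.mono (fun _ _ => Or.inl) _ _ h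

lemma not_wReach_zero_of_reach (ha : ¬ WReach E 0 a) (h : Reach E a b) : ¬ WReach E 0 b :=
  fun hb => ha (hb.trans h.wReach.symm)

lemma wReach_zero_snd (he : e ∈ zeroComponent E) : WReach E 0 e.2 :=
  (mem_zeroComponent.1 he).2.tail (Or.inl (mem_zeroComponent.1 he).1)

lemma not_wReach_zero_snd (he : e ∈ otherComponents E) : ¬ WReach E 0 e.2 := fun h =>
  (mem_otherComponents.1 he).2 (h.tail (Or.inr (mem_otherComponents.1 he).1))

lemma reach_otherComponents_of_reach (ha : ¬ WReach E 0 a) (h : Reach E a b) :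
    Reach (otherComponents E) a b := by
  induction h with
  | refl => exact .refl
  | @tail x c hax hxc ih =>
    exact ih.tail (mem_otherComponents.2 ⟨hxc, not_wReach_zero_of_reach ha hax⟩)

lemma IsFirstOrderAEndotactic.eq_single_of_mem_otherComponents
    (hG : IsFirstOrderAEndotactic E) (he : e ∈ otherComponents E) :
    ∃ k l, e = (Pi.single k 1, Pi.single l 1) := by
  obtain ⟨y, y'⟩ := e
  obtain ⟨hyy', hy⟩ := mem_otherComponents.1 he
  have hy' := not_wReach_zero_snd he
  obtain rfl | ⟨k, rfl⟩ := hG.source_eq_zero_or_single hyy'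
  · exact absurd .refl hy
  obtain rfl | ⟨l, rfl⟩ := hG.target_eq_zero_or_single hyy'
  · exact absurd .refl hy'
  exact ⟨k, l, rfl⟩

end Components

section ClosedSpecies

variable {E : Finset (Edge d)} {T : Finset (Fin d)}

def IsOutClosed (E : Finset (Edge d)) (T : Finset (Fin d)) : Prop :=
  ∀ k ∈ T, ∀ w, (Pi.single k 1, w) ∈ E → ∃ l ∈ T, w = Pi.single l 1

def IsInClosed (E : Finset (Edge d)) (T : Finset (Fin d)) : Prop :=
  ∀ z w, (z, w) ∈ E → (∃ i ∈ T, w i ≠ 0) → ∃ k ∈ T, z = Pi.single k 1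

noncomputable def reachSet (E : Finset (Edge d)) (a : Vec d) : Finset (Fin d) :=
  univ.filter (fun l => Reach E a (Pi.single l 1))

namespace IsFirstOrderAEndotactic

lemma sum_source_eq_zero (hG : IsFirstOrderAEndotactic E) {z w : Vec d} (hzw : (z, w) ∈ E)
    (hz : ¬ ∃ k ∈ T, z = Pi.single k 1) : ∑ i ∈ T, z i = 0 := by
  obtain rfl | ⟨k, rfl⟩ := hG.source_eq_zero_or_single hzw
  · simp
  · rw [sum_single_one, if_neg fun hk => hz ⟨k, hk, rfl⟩]

lemma isInClosed_of_isOutClosed (hG : IsFirstOrderAEndotactic E) (hT : T.Nonempty)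
    (hout : IsOutClosed E T) : IsInClosed E T := by
  intro z w hzw ⟨i, hi, hwi⟩
  by_contra hz
  obtain ⟨z', w', hzw', hne, hlt⟩ := hG.aEndotactic.exists_source_gt hT hzw
    (by rw [hG.sum_source_eq_zero hzw hz]; exact sum_pos_of_nat (hG.natural_snd hzw) hi hwi)
  rw [hG.sum_source_eq_zero hzw hz] at hlt
  by_cases hz' : ∃ k ∈ T, z' = Pi.single k 1
  · obtain ⟨k, hk, rfl⟩ := hz'
    obtain ⟨l, hl, rfl⟩ := hout k hk w' hzw'
    rw [sum_single_one, sum_single_one, if_pos hk, if_pos hl] at hne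
    exact hne rfl
  · rw [hG.sum_source_eq_zero hzw' hz'] at hlt
    exact lt_irrefl _ hlt

lemma isOutClosed_of_isInClosed (hG : IsFirstOrderAEndotactic E) (hT : T.Nonempty)
    (hin : IsInClosed E T) : IsOutClosed E T := by
  intro k hk w hw
  by_cases hwT : ∃ i ∈ T, w i ≠ 0
  · obtain rfl | ⟨l, rfl⟩ := hG.target_eq_zero_or_single hw
    · simp at hwT
    · obtain ⟨i, hi, hli⟩ := hwT
      obtain rfl := eq_of_single_one_apply_ne_zero hli
      exact ⟨l, hi, rfl⟩
  push Not at hwT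
  obtain ⟨z', w', hzw', hne, hlt⟩ := hG.aEndotactic.exists_source_lt hT hw
    (by rw [sum_eq_zero hwT, sum_single_one, if_pos hk]; exact one_pos)
  have hz' : ¬ ∃ j ∈ T, z' = Pi.single j 1 := by
    rintro ⟨j, hj, rfl⟩
    rw [sum_single_one, sum_single_one, if_pos hj, if_pos hk] at hlt
    exact lt_irrefl _ hlt
  rw [hG.sum_source_eq_zero hzw' hz'] at hne
  exact absurd (hin z' w' hzw' (exists_ne_zero_of_sum_ne_zero hne)) hz'

lemma coord_eq_zero_of_wReach_zero (hG : IsFirstOrderAEndotactic E) (hin : IsInClosed E T)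
    (hout : IsOutClosed E T) {v : Vec d} (hv : WReach E 0 v) : ∀ i ∈ T, v i = 0 := by
  induction hv with
  | refl => simp
  | @tail a b _ hab ih =>
    by_contra! hb
    rcases hab with hab | hba
    · obtain ⟨k, hk, rfl⟩ := hin a b hab hb
      exact one_ne_zero (α := ℝ) (by simpa using ih k hk)
    · obtain ⟨i, hi, hbi⟩ := hb
      obtain rfl | ⟨k, rfl⟩ := hG.source_eq_zero_or_single hba
      · exact hbi rfl
      obtain rfl := eq_of_single_one_apply_ne_zero hbi
      obtain ⟨l, hl, rfl⟩ := hout k hi a hba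
      exact one_ne_zero (α := ℝ) (by simpa using ih l hl)

lemma not_isSpeciesOf_zeroComponent (hG : IsFirstOrderAEndotactic E) (hout : IsOutClosed E T)
    {i : Fin d} (hi : i ∈ T) : ¬ IsSpeciesOf (zeroComponent E) i := by
  have hin := hG.isInClosed_of_isOutClosed ⟨i, hi⟩ hout
  rintro ⟨e, he, hei | hei⟩
  · exact hei (hG.coord_eq_zero_of_wReach_zero hin hout (mem_zeroComponent.1 he).2 i hi)
  · exact hei (hG.coord_eq_zero_of_wReach_zero hin hout (wReach_zero_snd he) i hi)

end IsFirstOrderAEndotactic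

end ClosedSpecies

namespace IsFirstOrderAEndotactic

variable {E : Finset (Edge d)}

lemma isOutClosed_reachSet (hG : IsFirstOrderAEndotactic E) {a : Vec d}
    (ha : ¬ WReach E 0 a) : IsOutClosed E (reachSet E a) := by
  intro k hk w hw
  have hak : Reach E a (Pi.single k 1) := (mem_filter.1 hk).2
  obtain rfl | ⟨l, rfl⟩ := hG.target_eq_zero_or_single hw
  · exact absurd (.single (Or.inr hw)) (not_wReach_zero_of_reach ha hak)
  · exact ⟨l, mem_filter.2 ⟨mem_univ l, hak.tail hw⟩, rfl⟩

lemma reach_of_mem_otherComponents (hG : IsFirstOrderAEndotactic E) {y y' : Vec d}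
    (he : (y, y') ∈ otherComponents E) : Reach E y' y := by
  obtain ⟨k, l, he'⟩ := hG.eq_single_of_mem_otherComponents he
  obtain ⟨rfl, rfl⟩ := Prod.ext_iff.1 he'
  have hl : l ∈ reachSet E (Pi.single l 1) := mem_filter.2 ⟨mem_univ l, .refl⟩
  have hin := hG.isInClosed_of_isOutClosed ⟨l, hl⟩
    (hG.isOutClosed_reachSet (not_wReach_zero_snd he))
  obtain ⟨j, hj, hkj⟩ := hin _ _ (mem_otherComponents.1 he).1 ⟨l, hl, by simp⟩
  rw [hkj]
  exact (mem_filter.1 hj).2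

lemma weaklyReversible_otherComponents (hG : IsFirstOrderAEndotactic E) :
    WeaklyReversible (otherComponents E) := fun _ he =>
  reach_otherComponents_of_reach (not_wReach_zero_snd he) (hG.reach_of_mem_otherComponents he)

lemma not_isSpeciesOf_zeroComponent_and_otherComponents (hG : IsFirstOrderAEndotactic E)
    (i : Fin d) : ¬ (IsSpeciesOf (zeroComponent E) i ∧ IsSpeciesOf (otherComponents E) i) := by
  rintro ⟨h0, e, he, hei⟩
  have hi : ¬ WReach E 0 (Pi.single i 1) := by
    obtain ⟨k, l, rfl⟩ := hG.eq_single_of_mem_otherComponents he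
    rcases hei with hki | hli
    · obtain rfl := eq_of_single_one_apply_ne_zero hki
      exact (mem_otherComponents.1 he).2
    · obtain rfl := eq_of_single_one_apply_ne_zero hli
      exact not_wReach_zero_snd he
  exact hG.not_isSpeciesOf_zeroComponent (hG.isOutClosed_reachSet hi)
    (mem_filter.2 ⟨mem_univ i, .refl⟩) h0

lemma mem_zeroComponent_of_isSpeciesOf (hG : IsFirstOrderAEndotactic E) {i : Fin d}
    (hi : IsSpeciesOf (zeroComponent E) i) {e : Edge d} (he : e ∈ E) (hei : e.1 i ≠ 0 ∨ e.2 i ≠ 0) :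
    e ∈ zeroComponent E := by
  by_contra h
  exact hG.not_isSpeciesOf_zeroComponent_and_otherComponents i
    ⟨hi, e, mem_sdiff.2 ⟨he, h⟩, hei⟩

end IsFirstOrderAEndotactic

section Deficiency

variable {F : Finset (Edge d)} {a b c y : Vec d}

lemma SCCeq.symm (h : SCCeq F a b) : SCCeq F b a := ⟨h.2, h.1⟩

lemma SCCeq.trans (h : SCCeq F a b) (h' : SCCeq F b c) : SCCeq F a c :=
  ⟨h.1.trans h'.1, h'.2.trans h.2⟩

lemma mem_sccClass : b ∈ sccClass F a ↔ b ∈ vertexFinset F ∧ SCCeq F a b := mem_filter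

lemma mem_sccClass_self (hy : y ∈ vertexFinset F) : y ∈ sccClass F y :=
  mem_sccClass.2 ⟨hy, .refl, .refl⟩

lemma sccClass_eq_of_sccEq (h : SCCeq F a b) : sccClass F a = sccClass F b := by
  ext z
  simp only [mem_sccClass]
  exact and_congr_right fun _ => ⟨h.symm.trans, h.trans⟩

lemma sccEq_of_mem_edges (hwr : WeaklyReversible F) {e : Edge d} (he : e ∈ F) :
    SCCeq F e.1 e.2 :=
  ⟨.single he, hwr e he⟩

noncomputable def sccRep (F : Finset (Edge d)) (y : Vec d) : Vec d :=
  if h : (sccClass F y).Nonempty then h.choose else 0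

lemma sccRep_mem_sccClass (hy : y ∈ vertexFinset F) : sccRep F y ∈ sccClass F y := by
  have hne : (sccClass F y).Nonempty := ⟨y, mem_sccClass_self hy⟩
  rw [sccRep, dif_pos hne]
  exact hne.choose_spec

lemma sccRep_eq_of_sccEq (h : SCCeq F a b) : sccRep F a = sccRep F b := by
  simp only [sccRep, sccClass_eq_of_sccEq h]

noncomputable def sccReps (F : Finset (Edge d)) : Finset (Vec d) :=
  (vertexFinset F).filter (fun y => sccRep F y = y)

lemma sccReps_subset_vertexFinset : sccReps F ⊆ vertexFinset F := filter_subset _ _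

lemma sccRep_mem_sccReps (hy : y ∈ vertexFinset F) : sccRep F y ∈ sccReps F := by
  obtain ⟨hrep, hyrep⟩ := mem_sccClass.1 (sccRep_mem_sccClass hy)
  exact mem_filter.2 ⟨hrep, (sccRep_eq_of_sccEq hyrep).symm⟩

lemma card_image_sccClass :
    ((vertexFinset F).image (sccClass F)).card = (sccReps F).card := by
  have himage : (vertexFinset F).image (sccClass F) = (sccReps F).image (sccClass F) := by
    refine Subset.antisymm (fun C hC => ?_) (image_subset_image sccReps_subset_vertexFinset)
    obtain ⟨y, hy, rfl⟩ := mem_image.1 hC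
    exact mem_image.2 ⟨sccRep F y, sccRep_mem_sccReps hy,
      (sccClass_eq_of_sccEq (mem_sccClass.1 (sccRep_mem_sccClass hy)).2).symm⟩
  rw [himage, card_image_of_injOn]
  intro a ha b hb hab
  have hb' := mem_sccClass_self (sccReps_subset_vertexFinset hb)
  rw [← hab] at hb'
  rw [← (mem_filter.1 ha).2, ← (mem_filter.1 hb).2]
  exact sccRep_eq_of_sccEq (mem_sccClass.1 hb').2

lemma fst_mem_vertexFinset {e : Edge d} (he : e ∈ F) : e.1 ∈ vertexFinset F :=
  mem_union_left _ (mem_image_of_mem _ he)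

lemma snd_mem_vertexFinset {e : Edge d} (he : e ∈ F) : e.2 ∈ vertexFinset F :=
  mem_union_right _ (mem_image_of_mem _ he)

lemma exists_edge_of_mem_vertexFinset (hy : y ∈ vertexFinset F) : ∃ e ∈ F, e.1 = y ∨ e.2 = y := by
  simp only [vertexFinset, mem_union, mem_image] at hy
  rcases hy with ⟨e, he, rfl⟩ | ⟨e, he, rfl⟩
  exacts [⟨e, he, Or.inl rfl⟩, ⟨e, he, Or.inr rfl⟩]

lemma two_le_card_sccClass (hwr : WeaklyReversible F) (hloop : ∀ e ∈ F, e.1 ≠ e.2)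
    (hy : y ∈ vertexFinset F) : 2 ≤ (sccClass F y).card := by
  obtain ⟨e, he, hey⟩ := exists_edge_of_mem_vertexFinset hy
  have hclass : sccClass F y = sccClass F e.1 := by
    rcases hey with rfl | rfl
    exacts [rfl, sccClass_eq_of_sccEq (sccEq_of_mem_edges hwr he).symm]
  rw [hclass]
  exact one_lt_card.2 ⟨e.1, mem_sccClass_self (fst_mem_vertexFinset he), e.2,
    mem_sccClass.2 ⟨snd_mem_vertexFinset he, sccEq_of_mem_edges hwr he⟩, hloop e he⟩

lemma numNontrivialSCC_eq_card_sccReps (hwr : WeaklyReversible F)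
    (hloop : ∀ e ∈ F, e.1 ≠ e.2) : numNontrivialSCC F = (sccReps F).card := by
  rw [numNontrivialSCC, filter_true_of_mem, card_image_sccClass]
  intro C hC
  obtain ⟨y, hy, rfl⟩ := mem_image.1 hC
  exact two_le_card_sccClass hwr hloop hy

lemma sub_mem_stoichSpan_of_reach (h : Reach F a b) : b - a ∈ stoichSpan d F := by
  induction h with
  | refl => simp
  | @tail x c _ hxc ih =>
    simpa using add_mem ih (Submodule.subset_span ⟨(x, c), hxc, rfl⟩ : c - x ∈ stoichSpan d F)

lemma stoichSpan_eq_span_sub_sccRep (hwr : WeaklyReversible F) :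
    stoichSpan d F = Submodule.span ℝ
      (Set.range fun y : ↥(vertexFinset F \ sccReps F) => (y : Vec d) - sccRep F y) := by
  set S := Submodule.span ℝ
      (Set.range fun y : ↥(vertexFinset F \ sccReps F) => (y : Vec d) - sccRep F y)
  have hsub : ∀ y ∈ vertexFinset F, y - sccRep F y ∈ S := by
    intro y hy
    by_cases hrep : y ∈ sccReps F
    · simp [(mem_filter.1 hrep).2]
    · exact Submodule.subset_span ⟨⟨y, mem_sdiff.2 ⟨hy, hrep⟩⟩, rfl⟩
  refine le_antisymm (Submodule.span_le.2 ?_) (Submodule.span_le.2 ?_)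
  · rintro _ ⟨e, he, rfl⟩
    have hrep := sccRep_eq_of_sccEq (sccEq_of_mem_edges hwr he)
    have : e.2 - e.1 = (e.2 - sccRep F e.2) - (e.1 - sccRep F e.1) := by rw [hrep]; abel
    rw [SetLike.mem_coe, this]
    exact sub_mem (hsub _ (snd_mem_vertexFinset he)) (hsub _ (fst_mem_vertexFinset he))
  · rintro _ ⟨⟨y, hy⟩, rfl⟩
    exact sub_mem_stoichSpan_of_reach
      (mem_sccClass.1 (sccRep_mem_sccClass (mem_sdiff.1 hy).1)).2.2

/-- Pairing with the non-representative vertices turns the family `y - sccRep y` into the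
standard basis: distinct unit vectors are orthogonal, and representatives are never paired with. -/
lemma linearIndependent_sub_sccRep (hunit : ∀ y ∈ vertexFinset F, ∃ k, y = Pi.single k 1) :
    LinearIndependent ℝ
      (fun y : ↥(vertexFinset F \ sccReps F) => (y : Vec d) - sccRep F y) := by
  have hdot : ∀ y ∈ vertexFinset F, ∀ z ∈ vertexFinset F, y ⬝ᵥ z = if y = z then 1 else 0 := by
    intro y hy z hz
    obtain ⟨k, rfl⟩ := hunit y hy
    obtain ⟨l, rfl⟩ := hunit z hz
    rw [single_dotProduct, one_mul, Pi.single_apply]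
    exact if_congr single_one_injective.eq_iff.symm rfl rfl
  let M : Matrix ↥(vertexFinset F \ sccReps F) (Fin d) ℝ := fun y => y
  refine LinearIndependent.of_comp M.mulVecLin ?_
  convert Pi.linearIndependent_single_one ↥(vertexFinset F \ sccReps F) ℝ using 1
  ext ⟨y, hy⟩ ⟨x, hx⟩
  obtain ⟨hxV, hxR⟩ := mem_sdiff.1 hx
  have hyV := (mem_sdiff.1 hy).1
  have hrep := sccRep_mem_sccReps hyV
  change x ⬝ᵥ (y - sccRep F y) =
    (Pi.single ⟨y, hy⟩ 1 : ↥(vertexFinset F \ sccReps F) → ℝ) ⟨x, hx⟩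
  rw [dotProduct_sub, hdot x hxV y hyV, hdot x hxV _ (mem_filter.1 hrep).1,
    if_neg fun (h : x = sccRep F y) => hxR (h ▸ hrep), sub_zero, Pi.single_apply]
  simp only [Subtype.mk.injEq]

lemma deficiencyZero_of_weaklyReversible (hwr : WeaklyReversible F)
    (hloop : ∀ e ∈ F, e.1 ≠ e.2) (hunit : ∀ y ∈ vertexFinset F, ∃ k, y = Pi.single k 1) :
    DeficiencyZero F := by
  rw [DeficiencyZero, stoichSpan_eq_span_sub_sccRep hwr,
    finrank_span_eq_card (linearIndependent_sub_sccRep hunit), Fintype.card_coe,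
    numNontrivialSCC_eq_card_sccReps hwr hloop,
    card_sdiff_add_card_eq_card sccReps_subset_vertexFinset]

end Deficiency

section StrongEndotacticity

variable {E F : Finset (Edge d)} {u w : Vec d}

lemma dotProduct_eq_zero_of_support (hu : ∀ i, w i ≠ 0 → u i = 0) : w ⬝ᵥ u = 0 :=
  sum_eq_zero fun i _ => by by_cases hi : w i = 0 <;> simp [hi, hu i]

lemma dotProduct_nonpos_of_support (hw : ∀ i, 0 ≤ w i) (hu : ∀ i, w i ≠ 0 → u i ≤ 0) :
    w ⬝ᵥ u ≤ 0 :=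
  sum_nonpos fun i _ => by
    by_cases hi : w i = 0
    · simp [hi]
    · exact mul_nonpos_of_nonneg_of_nonpos (hw i) (hu i hi)

lemma dotProduct_neg_of_support (hw : ∀ i, 0 ≤ w i) (hu : ∀ i, w i ≠ 0 → u i ≤ 0) {i : Fin d}
    (hwi : w i ≠ 0) (hui : u i < 0) : w ⬝ᵥ u < 0 := by
  refine sum_neg' (fun j _ => ?_) ⟨i, mem_univ i, mul_neg_of_pos_of_neg ((hw i).lt_of_ne' hwi) hui⟩
  by_cases hj : w j = 0
  · simp [hj]
  · exact mul_nonpos_of_nonneg_of_nonpos (hw j) (hu j hj)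

def IsTopSource (F : Finset (Edge d)) (u y : Vec d) : Prop :=
  y ∈ srcU F u ∧ (∀ z, IsSource F z → z ⬝ᵥ u ≤ y ⬝ᵥ u) ∧
    ∀ z w, (z, w) ∈ F → z ⬝ᵥ u = y ⬝ᵥ u → w ⬝ᵥ u ≤ z ⬝ᵥ u

lemma IsTopSource.uEndotactic {y : Vec d} (hy : IsTopSource F u y) : uEndotactic F u := by
  obtain ⟨hsrc, hmax, hlevel⟩ := hy
  rintro ⟨z, w, hzw, hpos, hz⟩
  have hzy : z ⬝ᵥ u = y ⬝ᵥ u := le_antisymm (hmax z ⟨w, hzw⟩) (hz y hsrc)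
  rw [sub_dotProduct] at hpos
  linarith [hlevel z w hzw hzy]

namespace IsFirstOrderAEndotactic

lemma source_of_mem_zeroComponent (hG : IsFirstOrderAEndotactic E) {y y' : Vec d}
    (he : (y, y') ∈ zeroComponent E) :
    y = 0 ∨ ∃ k, IsSpeciesOf (zeroComponent E) k ∧ y = Pi.single k 1 := by
  obtain rfl | ⟨k, rfl⟩ := hG.source_eq_zero_or_single (mem_zeroComponent.1 he).1
  · exact Or.inl rfl
  · exact Or.inr ⟨k, ⟨_, he, Or.inl (by simp)⟩, rfl⟩

lemma exists_single_mem_srcU_of_pos (hG : IsFirstOrderAEndotactic E) {i₀ : Fin d}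
    (hi₀ : IsSpeciesOf (zeroComponent E) i₀) (hpos : 0 < u i₀) :
    ∃ i, IsSpeciesOf (zeroComponent E) i ∧ u i = u i₀ ∧
      Pi.single i 1 ∈ srcU (zeroComponent E) u := by
  by_contra! h
  -- otherwise the species of `G⁰` at level `u i₀` form an out-closed set
  refine hG.not_isSpeciesOf_zeroComponent
    (T := univ.filter fun i => IsSpeciesOf (zeroComponent E) i ∧ u i = u i₀) ?_
    (mem_filter.2 ⟨mem_univ i₀, hi₀, rfl⟩) hi₀
  intro k hk w hw
  obtain ⟨hk₀, huk⟩ := (mem_filter.1 hk).2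
  have hwG := hG.mem_zeroComponent_of_isSpeciesOf hk₀ hw (Or.inl (by simp))
  have hwu : w ⬝ᵥ u = u i₀ := by
    by_contra hne
    refine h k hk₀ huk ⟨w, hwG, ?_⟩
    rw [sub_dotProduct, single_dotProduct, one_mul, huk]
    exact sub_ne_zero.2 hne
  obtain rfl | ⟨l, rfl⟩ := hG.target_eq_zero_or_single hw
  · rw [zero_dotProduct] at hwu
    linarith
  · rw [single_dotProduct, one_mul] at hwu
    exact ⟨l, mem_filter.2 ⟨mem_univ l, ⟨_, hwG, Or.inr (by simp)⟩, hwu⟩, rfl⟩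

lemma exists_isTopSource_of_pos (hG : IsFirstOrderAEndotactic E)
    (hpos : ∃ i, IsSpeciesOf (zeroComponent E) i ∧ 0 < u i) :
    ∃ y, IsTopSource (zeroComponent E) u y := by
  obtain ⟨i₀, hi₀, hmax⟩ : ∃ i₀, IsSpeciesOf (zeroComponent E) i₀ ∧
      ∀ i, IsSpeciesOf (zeroComponent E) i → u i ≤ u i₀ := by
    obtain ⟨i, hi, -⟩ := hpos
    obtain ⟨i₀, hi₀, hmax⟩ := exists_max_image (univ.filter (IsSpeciesOf (zeroComponent E))) u
      ⟨i, mem_filter.2 ⟨mem_univ i, hi⟩⟩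
    exact ⟨i₀, (mem_filter.1 hi₀).2, fun i hi => hmax i (mem_filter.2 ⟨mem_univ i, hi⟩)⟩
  have hpos₀ : 0 < u i₀ := by
    obtain ⟨i, hi, hui⟩ := hpos
    exact hui.trans_le (hmax i hi)
  obtain ⟨i, -, hui, hsrc⟩ := hG.exists_single_mem_srcU_of_pos hi₀ hpos₀
  refine ⟨Pi.single i 1, hsrc, fun z ⟨w, hzw⟩ => ?_, fun z w hzw hz => ?_⟩
  · rw [single_dotProduct, one_mul, hui]
    obtain rfl | ⟨k, hk, rfl⟩ := hG.source_of_mem_zeroComponent hzw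
    · rw [zero_dotProduct]
      exact hpos₀.le
    · rw [single_dotProduct, one_mul]
      exact hmax k hk
  · rw [single_dotProduct, one_mul, hui] at hz
    obtain rfl | ⟨k, -, rfl⟩ := hG.source_of_mem_zeroComponent hzw
    · rw [zero_dotProduct] at hz
      exact absurd hz hpos₀.ne
    rw [hz]
    obtain rfl | ⟨l, rfl⟩ := hG.target_eq_zero_or_single (mem_zeroComponent.1 hzw).1
    · rw [zero_dotProduct]
      exact hpos₀.le
    · rw [single_dotProduct, one_mul]
      exact hmax l ⟨_, hzw, Or.inr (by simp)⟩

lemma exists_mem_srcU_dotProduct_eq_zero (hG : IsFirstOrderAEndotactic E)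
    (hneg : ∀ i, IsSpeciesOf (zeroComponent E) i → u i ≤ 0)
    (hu : ∃ e ∈ zeroComponent E, (e.2 - e.1) ⬝ᵥ u ≠ 0) :
    ∃ y ∈ srcU (zeroComponent E) u, y ⬝ᵥ u = 0 := by
  by_contra! h
  obtain ⟨i₀, hi₀, hui₀⟩ : ∃ i, IsSpeciesOf (zeroComponent E) i ∧ u i < 0 := by
    by_contra! hzero
    obtain ⟨⟨z, w⟩, he, hne⟩ := hu
    have hz : z ⬝ᵥ u = 0 := by
      obtain rfl | ⟨k, hk, rfl⟩ := hG.source_of_mem_zeroComponent he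
      · exact zero_dotProduct u
      · rw [single_dotProduct, one_mul]
        exact (hneg k hk).antisymm (hzero k hk)
    have hw : w ⬝ᵥ u = 0 := dotProduct_eq_zero_of_support fun i hi =>
      (hneg i ⟨_, he, Or.inr hi⟩).antisymm (hzero i ⟨_, he, Or.inr hi⟩)
    exact hne (by rw [sub_dotProduct, hz, hw, sub_zero])
  -- the species of `G⁰` on which `u` is negative form an in-closed set
  set N := univ.filter fun i => IsSpeciesOf (zeroComponent E) i ∧ u i < 0
  have hi₀N : i₀ ∈ N := mem_filter.2 ⟨mem_univ i₀, hi₀, hui₀⟩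
  refine hG.not_isSpeciesOf_zeroComponent (hG.isOutClosed_of_isInClosed ⟨i₀, hi₀N⟩ ?_) hi₀N hi₀
  intro z w hzw ⟨i, hi, hwi⟩
  obtain ⟨hiS, hui⟩ := (mem_filter.1 hi).2
  have hzwG := hG.mem_zeroComponent_of_isSpeciesOf hiS hzw (Or.inr hwi)
  have hw : w ⬝ᵥ u < 0 := dotProduct_neg_of_support (coord_nonneg_of_nat (hG.natural_snd hzw))
    (fun j hj => hneg j ⟨_, hzwG, Or.inr hj⟩) hwi hui
  have hz : z ⬝ᵥ u ≠ 0 := fun hz =>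
    h z ⟨w, hzwG, by rw [sub_dotProduct, hz, sub_zero]; exact hw.ne⟩ hz
  obtain rfl | ⟨k, hk, rfl⟩ := hG.source_of_mem_zeroComponent hzwG
  · exact absurd (zero_dotProduct u) hz
  · rw [single_dotProduct, one_mul] at hz
    exact ⟨k, mem_filter.2 ⟨mem_univ k, hk, (hneg k hk).lt_of_ne hz⟩, rfl⟩

lemma exists_isTopSource_of_nonpos (hG : IsFirstOrderAEndotactic E)
    (hneg : ∀ i, IsSpeciesOf (zeroComponent E) i → u i ≤ 0)
    (hu : ∃ e ∈ zeroComponent E, (e.2 - e.1) ⬝ᵥ u ≠ 0) :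
    ∃ y, IsTopSource (zeroComponent E) u y := by
  obtain ⟨y, hy, hy0⟩ := hG.exists_mem_srcU_dotProduct_eq_zero hneg hu
  refine ⟨y, hy, fun z ⟨w, hzw⟩ => ?_, fun z w hzw hz => ?_⟩
  · rw [hy0]
    obtain rfl | ⟨k, hk, rfl⟩ := hG.source_of_mem_zeroComponent hzw
    · exact (zero_dotProduct u).le
    · rw [single_dotProduct, one_mul]
      exact hneg k hk
  · rw [hz, hy0]
    exact dotProduct_nonpos_of_support
      (coord_nonneg_of_nat (hG.natural_snd (mem_zeroComponent.1 hzw).1))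
      fun j hj => hneg j ⟨_, hzw, Or.inr hj⟩

lemma stronglyEndotactic_zeroComponent (hG : IsFirstOrderAEndotactic E) :
    StronglyEndotactic (zeroComponent E) := by
  intro u hu
  obtain ⟨y, hy⟩ : ∃ y, IsTopSource (zeroComponent E) u y := by
    by_cases hpos : ∃ i, IsSpeciesOf (zeroComponent E) i ∧ 0 < u i
    · exact hG.exists_isTopSource_of_pos hpos
    · push Not at hpos
      exact hG.exists_isTopSource_of_nonpos hpos hu
  exact ⟨hy.uEndotactic, y, hy.1, hy.2.1⟩

lemma endotactic (hG : IsFirstOrderAEndotactic E) : Endotactic E := by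
  rintro u ⟨y, y', he, hpos, hmax⟩
  by_cases hy : WReach E 0 y
  · have he₀ : (y, y') ∈ zeroComponent E := mem_zeroComponent.2 ⟨he, hy⟩
    exact (hG.stronglyEndotactic_zeroComponent u ⟨_, he₀, hpos.ne'⟩).1
      ⟨y, y', he₀, hpos, fun z ⟨w, hzw, hne⟩ => hmax z ⟨w, (mem_zeroComponent.1 hzw).1, hne⟩⟩
  · rw [sub_dotProduct] at hpos
    obtain ⟨z, w, hzw, hz, hw⟩ :=
      (hG.reach_of_mem_otherComponents (mem_otherComponents.2 ⟨he, hy⟩)).exists_edge_of_lt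
        (f := (· ⬝ᵥ u)) (c := y ⬝ᵥ u) (by simpa using hpos) le_rfl
    have hne : (w - z) ⬝ᵥ u ≠ 0 := by
      rw [sub_dotProduct]
      exact (sub_neg.2 (hw.trans_lt hz)).ne
    exact absurd (hmax z ⟨w, hzw, hne⟩) (not_le.2 hz)

end IsFirstOrderAEndotactic

end StrongEndotacticity

end FirstOrderGraphs

theorem stmt12_general {d : ℕ} (E : Finset (Edge d))
    (hsimple : ∀ e ∈ E, e.1 ≠ e.2)
    (hnat : ∀ y, InV E y → ∀ i, ∃ n : ℕ, y i = (n : ℝ))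
    (hfo : ∀ y, IsSource E y → ∑ i, y i ≤ 1)
    (hA : AEndotactic E) :
    (∀ i : Fin d,
      ¬ ((∃ e ∈ E.filter (fun e => WReach E 0 e.1), e.1 i ≠ 0 ∨ e.2 i ≠ 0) ∧
         (∃ e ∈ E \ E.filter (fun e => WReach E 0 e.1), e.1 i ≠ 0 ∨ e.2 i ≠ 0))) ∧
    WeaklyReversible (E \ E.filter (fun e => WReach E 0 e.1)) ∧
    (∀ e ∈ E \ E.filter (fun e => WReach E 0 e.1),
      ∑ i, e.1 i = 1 ∧ ∑ i, e.2 i = 1) ∧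
    DeficiencyZero (E \ E.filter (fun e => WReach E 0 e.1)) ∧
    ((E.filter (fun e => WReach E 0 e.1)).Nonempty →
      StronglyEndotactic (E.filter (fun e => WReach E 0 e.1))) ∧
    Endotactic E := by
  have hG : IsFirstOrderAEndotactic E := ⟨hnat, hfo, hA⟩
  have hunit : ∀ e ∈ otherComponents E, ∃ k l, e = (Pi.single k 1, Pi.single l 1) :=
    fun e he => hG.eq_single_of_mem_otherComponents he
  refine ⟨hG.not_isSpeciesOf_zeroComponent_and_otherComponents, hG.weaklyReversible_otherComponents,
    fun e he => ?_, deficiencyZero_of_weaklyReversible hG.weaklyReversible_otherComponents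
      (fun e he => hsimple e (mem_otherComponents.1 he).1) fun y hy => ?_,
    fun _ => hG.stronglyEndotactic_zeroComponent, hG.endotactic⟩
  · obtain ⟨k, l, rfl⟩ := hunit e he
    simp
  · obtain ⟨e, he, rfl | rfl⟩ := exists_edge_of_mem_vertexFinset hy <;>
      obtain ⟨k, l, rfl⟩ := hunit e he
    exacts [⟨k, rfl⟩, ⟨l, rfl⟩]

/-- Structure theorem: for an `𝒜`-endotactic first order reaction graph `G`,
the component `G⁰` of the zero complex and the rest `G•` have disjoint sets of
species; `G•` is weakly reversible, monomolecular and of deficiency zero;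
`G⁰`, if nonempty, is strongly endotactic; consequently `G` is endotactic. -/
theorem stmt12 {d : ℕ} (E : Finset (Edge d))
    (hsimple : ∀ e ∈ E, e.1 ≠ e.2)
    (hnat : ∀ y, InV E y → ∀ i, ∃ n : ℕ, y i = (n : ℝ))
    (hfo : ∀ y, IsSource E y → ∑ i, y i ≤ 1)
    (hnored : ∀ i : Fin d, ∃ e ∈ E, e.2 i ≠ e.1 i)
    (hA : AEndotactic E) :
    (∀ i : Fin d,
      ¬ ((∃ e ∈ E.filter (fun e => WReach E 0 e.1), e.1 i ≠ 0 ∨ e.2 i ≠ 0) ∧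
         (∃ e ∈ E \ E.filter (fun e => WReach E 0 e.1), e.1 i ≠ 0 ∨ e.2 i ≠ 0))) ∧
    WeaklyReversible (E \ E.filter (fun e => WReach E 0 e.1)) ∧
    (∀ e ∈ E \ E.filter (fun e => WReach E 0 e.1),
      ∑ i, e.1 i = 1 ∧ ∑ i, e.2 i = 1) ∧
    DeficiencyZero (E \ E.filter (fun e => WReach E 0 e.1)) ∧
    ((E.filter (fun e => WReach E 0 e.1)).Nonempty →
      StronglyEndotactic (E.filter (fun e => WReach E 0 e.1))) ∧
    Endotactic E :=
  stmt12_general E hsimple hnat hfo hA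
end

section
/- Let G be a first order endotactic mass-action system whose underlying reaction graph is weakly connected and contains the zero complex (G = G⁰), with average flux matrix A ∈ M_d(ℝ) given by a_{ij} = Σ_{(e_i, y') ∈ E} κ_{e_i→y'}(y'_j − (e_i)_j) with positive rate constants κ. Then A is Metzler and WCDD, hence nonsingular with all eigenvalues of negative real part, and x_* = b(−A)^{-1} is the unique equilibrium of ẋ = xA + b, where b_i = Σ_{(0,y')∈E} κ_{0→y'} y'_i; moreover x_* is entrywise strictly positive. -/
/-!
Endotacticity, tested against indicator vectors `1_C` of sets of species, drives everything.
With `u = 1` it bounds the targets of the unit sources by mass one, so `A` is Metzler with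
nonpositive row sums. If `C` is the set of species from which `0` is unreachable, every
reaction preserves the `C`-mass, which weak connectivity turns into a contradiction; so every
`e_i` reaches `0`, and that path is a chain of nonzero entries of `A` ending at a row with
negative row sum. Hence `A` is WCDD, and so is `A - μ` for `Re μ ≥ 0`: the maximum of `|v|` on
a kernel vector would propagate along the chain to a strictly dominant row.

For the equilibrium `x`, summing `x A + b = 0` over the columns in `C = {x < 0}` shows that `C`
would be a closed set of rows with zero row sums, which the chain condition forbids. For
`C = {x = 0}` the same sum shows that nothing flows into `C` from `0` or from outside; the
vector `-1_C` then makes `C` closed.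
-/

open Matrix Finset
open scoped Matrix Classical

def SDDRow {d : ℕ} (A : Matrix (Fin d) (Fin d) ℝ) (i : Fin d) : Prop :=
  ∑ j ∈ Finset.univ.erase i, |A i j| < |A i i|

def WCDD {d : ℕ} (A : Matrix (Fin d) (Fin d) ℝ) : Prop :=
  (∀ i, ∑ j ∈ Finset.univ.erase i, |A i j| ≤ |A i i|) ∧
  ∀ i, ¬ SDDRow A i → ∃ j, SDDRow A j ∧
    Relation.ReflTransGen (fun p q : Fin d => p ≠ q ∧ A p q ≠ 0) i j

open Relation

section DominantKernel

variable {n 𝕜 : Type*} [Fintype n] [DecidableEq n] [NormedField 𝕜]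

theorem Matrix.norm_mul_norm_le_of_mulVec_eq_zero {B : Matrix n n 𝕜} {v : n → 𝕜}
    (hv : B *ᵥ v = 0) (i : n) :
    ‖B i i‖ * ‖v i‖ ≤ ∑ j ∈ univ.erase i, ‖B i j‖ * ‖v j‖ := by
  have hrow : B i i * v i = -∑ j ∈ univ.erase i, B i j * v j := by
    rw [eq_neg_iff_add_eq_zero, add_sum_erase _ (fun j => B i j * v j) (mem_univ i)]
    exact congrFun hv i
  calc ‖B i i‖ * ‖v i‖ = ‖∑ j ∈ univ.erase i, B i j * v j‖ := by rw [← norm_mul, hrow, norm_neg]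
    _ ≤ ∑ j ∈ univ.erase i, ‖B i j‖ * ‖v j‖ := by
      simpa only [norm_mul] using norm_sum_le (univ.erase i) (fun j => B i j * v j)

theorem Matrix.eq_zero_of_mulVec_eq_zero_of_chained_dominant {B : Matrix n n 𝕜}
    (hdom : ∀ i, ∑ j ∈ univ.erase i, ‖B i j‖ ≤ ‖B i i‖)
    (hchain : ∀ i, ∃ k, ∑ j ∈ univ.erase k, ‖B k j‖ < ‖B k k‖ ∧
      ReflTransGen (fun p q => p ≠ q ∧ B p q ≠ 0) i k)
    {v : n → 𝕜} (hv : B *ᵥ v = 0) : v = 0 := by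
  by_contra hv0
  obtain ⟨i₀, hi₀⟩ : ∃ i, v i ≠ 0 := by simpa [funext_iff] using hv0
  obtain ⟨m, -, hm⟩ := exists_max_image univ (fun i => ‖v i‖) ⟨i₀, mem_univ _⟩
  set M := ‖v m‖
  have hle : ∀ j, ‖v j‖ ≤ M := fun j => hm j (mem_univ j)
  have hMpos : 0 < M := (norm_pos_iff.2 hi₀).trans_le (hle i₀)
  -- At a row where `‖v‖` is maximal, `‖B i i‖ M ≤ ∑ ‖B i j‖ ‖v j‖ ≤ (∑ ‖B i j‖) M ≤ ‖B i i‖ M`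
  -- is tight.
  have hdefect : ∀ i, ‖v i‖ = M → ∑ j ∈ univ.erase i, ‖B i j‖ * (M - ‖v j‖) +
      M * (‖B i i‖ - ∑ j ∈ univ.erase i, ‖B i j‖) ≤ 0 := by
    intro i hi
    have := Matrix.norm_mul_norm_le_of_mulVec_eq_zero hv i
    have hsplit : ∑ j ∈ univ.erase i, ‖B i j‖ * (M - ‖v j‖) =
        M * ∑ j ∈ univ.erase i, ‖B i j‖ - ∑ j ∈ univ.erase i, ‖B i j‖ * ‖v j‖ := by
      simp only [mul_sub, sum_sub_distrib, mul_sum, mul_comm]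
    rw [hi] at this
    rw [hsplit]
    linarith
  have hpropagate : ∀ p q, ‖v p‖ = M → p ≠ q ∧ B p q ≠ 0 → ‖v q‖ = M := by
    rintro p q hp ⟨hpq, hBpq⟩
    have hterm : ‖B p q‖ * (M - ‖v q‖) ≤ 0 := by
      have := single_le_sum (f := fun j => ‖B p j‖ * (M - ‖v j‖))
        (fun j _ => mul_nonneg (norm_nonneg _) (sub_nonneg.2 (hle j)))
        (mem_erase.2 ⟨hpq.symm, mem_univ q⟩)
      nlinarith [hdefect p hp, hdom p]
    nlinarith [norm_pos_iff.2 hBpq, hle q]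
  obtain ⟨k, hk, hpath⟩ := hchain m
  have hvk : ‖v k‖ = M := by
    clear hk
    induction hpath with
    | refl => rfl
    | tail _ hpq ih => exact hpropagate _ _ ih hpq
  have hnonneg : 0 ≤ ∑ j ∈ univ.erase k, ‖B k j‖ * (M - ‖v j‖) :=
    sum_nonneg fun j _ => mul_nonneg (norm_nonneg _) (sub_nonneg.2 (hle j))
  nlinarith [hdefect k hvk]

end DominantKernel

section WCDD

variable {d : ℕ} {A : Matrix (Fin d) (Fin d) ℝ}

theorem WCDD.exists_sddRow_reach (hA : WCDD A) (i : Fin d) :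
    ∃ k, SDDRow A k ∧ ReflTransGen (fun p q => p ≠ q ∧ A p q ≠ 0) i k := by
  by_cases hi : SDDRow A i
  · exact ⟨i, hi, .refl⟩
  · exact hA.2 i hi

theorem WCDD.det_ne_zero (hA : WCDD A) : A.det ≠ 0 := by
  intro hdet
  obtain ⟨v, hv0, hv⟩ := Matrix.exists_mulVec_eq_zero_iff.2 hdet
  exact hv0 (Matrix.eq_zero_of_mulVec_eq_zero_of_chained_dominant hA.1 hA.exists_sddRow_reach hv)

theorem WCDD.re_neg_of_isEig (hA : WCDD A) (hdiag : ∀ i, A i i ≤ 0) {μ : ℂ} (hμ : IsEig A μ) :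
    μ.re < 0 := by
  obtain ⟨v, hv0, hv⟩ := hμ
  by_contra! hre
  set B := A.map Complex.ofReal - μ • 1
  have hoff : ∀ p q, p ≠ q → B p q = A p q := fun p q hpq => by
    simp [B, Matrix.one_apply_ne hpq]
  -- `Re μ ≥ 0` pushes the diagonal entry `A i i ≤ 0` further from the origin.
  have hdiag_le : ∀ i, |A i i| ≤ ‖B i i‖ := fun i => by
    have hre_B : (B i i).re = A i i - μ.re := by simp [B]
    have := Complex.abs_re_le_norm (B i i)
    rw [hre_B] at this
    rw [abs_of_nonpos (hdiag i)]
    linarith [neg_abs_le (A i i - μ.re)]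
  have hoff_sum : ∀ i, ∑ j ∈ univ.erase i, ‖B i j‖ = ∑ j ∈ univ.erase i, |A i j| := fun i =>
    sum_congr rfl fun j hj => by
      rw [hoff i j (mem_erase.1 hj).1.symm, Complex.norm_real, Real.norm_eq_abs]
  refine hv0 (Matrix.eq_zero_of_mulVec_eq_zero_of_chained_dominant (B := B)
    (fun i => (hoff_sum i).trans_le ((hA.1 i).trans (hdiag_le i))) (fun i => ?_) ?_)
  · obtain ⟨k, hk, hpath⟩ := hA.exists_sddRow_reach i
    refine ⟨k, (hoff_sum k).trans_lt (hk.trans_le (hdiag_le k)), ReflTransGen.mono ?_ _ _ hpath⟩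
    rintro p q ⟨hpq, hApq⟩
    exact ⟨hpq, by rw [hoff p q hpq]; exact_mod_cast hApq⟩
  · rw [Matrix.sub_mulVec, hv, Matrix.smul_mulVec, Matrix.one_mulVec, sub_self]

end WCDD

theorem Matrix.vecMul_add_eq_zero_iff {n : Type*} [Fintype n] [DecidableEq n] {A : Matrix n n ℝ}
    (hA : A.det ≠ 0) (b y : n → ℝ) : y ᵥ* A + b = 0 ↔ y = b ᵥ* (-A)⁻¹ := by
  have hunit : IsUnit (-A).det := by
    rw [Matrix.det_neg]
    exact (isUnit_iff_ne_zero.2 (pow_ne_zero _ (by norm_num))).mul (isUnit_iff_ne_zero.2 hA)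
  rw [add_eq_zero_iff_eq_neg, ← neg_eq_iff_eq_neg, ← Matrix.vecMul_neg]
  constructor
  · rintro rfl
    rw [Matrix.vecMul_vecMul, Matrix.mul_nonsing_inv _ hunit, Matrix.vecMul_one]
  · rintro rfl
    rw [Matrix.vecMul_vecMul, Matrix.nonsing_inv_mul _ hunit, Matrix.vecMul_one]

def Matrix.IsMetzler {n : Type*} (A : Matrix n n ℝ) : Prop := ∀ i j, i ≠ j → 0 ≤ A i j

theorem Matrix.sum_mul_sum_add_sum_eq_zero {n : Type*} [Fintype n] {A : Matrix n n ℝ}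
    {b x : n → ℝ} (hx : x ᵥ* A + b = 0) (C : Finset n) :
    ∑ i, x i * ∑ j ∈ C, A i j + ∑ j ∈ C, b j = 0 := by
  have hvecMul : ∑ j ∈ C, (x ᵥ* A) j = ∑ i, x i * ∑ j ∈ C, A i j := by
    simp only [Matrix.vecMul, dotProduct, mul_sum]
    exact sum_comm
  rw [← hvecMul, ← sum_add_distrib]
  exact sum_eq_zero fun j _ => congrFun hx j

namespace Matrix.IsMetzler

theorem sum_nonneg_of_notMem {n : Type*} {A : Matrix n n ℝ} (hM : A.IsMetzler) {C : Finset n}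
    {i : n} (hi : i ∉ C) : 0 ≤ ∑ j ∈ C, A i j :=
  sum_nonneg fun j hj => hM i j fun h => hi (h ▸ hj)

theorem sum_zeroSet_eq_zero {n : Type*} [Fintype n] {A : Matrix n n ℝ} (hM : A.IsMetzler)
    {b x : n → ℝ} (hb : 0 ≤ b) (hx0 : 0 ≤ x) (hx : x ᵥ* A + b = 0) :
    ∑ j ∈ {j | x j = 0}, b j = 0 ∧ ∀ i, 0 < x i → ∑ j ∈ {j | x j = 0}, A i j = 0 := by
  set C : Finset n := {j | x j = 0}
  have hterm : ∀ i ∈ univ, 0 ≤ x i * ∑ j ∈ C, A i j := fun i _ => by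
    by_cases hi : x i = 0
    · simp [hi]
    · exact mul_nonneg (hx0 i) (hM.sum_nonneg_of_notMem (by simpa [C] using hi))
  have hbal := Matrix.sum_mul_sum_add_sum_eq_zero hx C
  have hbC : 0 ≤ ∑ j ∈ C, b j := sum_nonneg fun j _ => hb j
  have hxA : ∑ i, x i * ∑ j ∈ C, A i j = 0 := by linarith [sum_nonneg hterm]
  refine ⟨by linarith [sum_nonneg hterm], fun i hi => ?_⟩
  exact (mul_eq_zero.1 ((sum_eq_zero_iff_of_nonneg hterm).1 hxA i (mem_univ i))).resolve_left
    hi.ne'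

variable {n : Type*} [Fintype n] [DecidableEq n] {A : Matrix n n ℝ}

theorem diag_nonpos (hM : A.IsMetzler) {i : n} (hi : ∑ j, A i j ≤ 0) : A i i ≤ 0 := by
  have := add_sum_erase univ (A i) (mem_univ i)
  linarith [hM.sum_nonneg_of_notMem (C := univ.erase i) (notMem_erase i univ)]

theorem sum_erase_abs (hM : A.IsMetzler) {i : n} (hi : ∑ j, A i j ≤ 0) :
    ∑ j ∈ univ.erase i, |A i j| = |A i i| + ∑ j, A i j := by
  rw [sum_congr rfl fun j hj => abs_of_nonneg (hM i j (mem_erase.1 hj).1.symm),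
    abs_of_nonpos (hM.diag_nonpos hi), ← add_sum_erase univ (A i) (mem_univ i)]
  ring

theorem wcdd {d : ℕ} {A : Matrix (Fin d) (Fin d) ℝ} (hM : A.IsMetzler)
    (hrow : ∀ i, ∑ j, A i j ≤ 0)
    (hchain : ∀ i, ∃ k, ∑ j, A k j < 0 ∧ ReflTransGen (fun p q => p ≠ q ∧ A p q ≠ 0) i k) :
    WCDD A := by
  refine ⟨fun i => by linarith [hM.sum_erase_abs (hrow i), hrow i], fun i _ => ?_⟩
  obtain ⟨k, hk, hpath⟩ := hchain i
  exact ⟨k, by rw [SDDRow, hM.sum_erase_abs (hrow k)]; linarith, hpath⟩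

variable (hM : A.IsMetzler) (hrow : ∀ i, ∑ j, A i j ≤ 0)
  (hchain : ∀ i, ∃ k, ∑ j, A k j < 0 ∧ ReflTransGen (fun p q => p ≠ q ∧ A p q ≠ 0) i k)
include hM hrow hchain

theorem exists_mem_sum_neg {C : Finset n} {i : n} (hi : i ∈ C) :
    ∃ p ∈ C, ∑ j ∈ C, A p j < 0 := by
  by_contra! hC
  have hout : ∀ p ∈ C, ∑ j ∈ Cᶜ, A p j = 0 ∧ ∑ j, A p j = 0 := fun p hp => by
    have := hM.sum_nonneg_of_notMem (C := Cᶜ) (notMem_compl.2 hp)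
    have := sum_add_sum_compl C (A p)
    constructor <;> linarith [hC p hp, hrow p]
  have hclosed : ∀ p q, p ∈ C → p ≠ q ∧ A p q ≠ 0 → q ∈ C := by
    rintro p q hp ⟨hpq, hApq⟩
    by_contra hq
    refine hApq ((sum_eq_zero_iff_of_nonneg fun j hj => ?_).1 (hout p hp).1 q (mem_compl.2 hq))
    exact hM p j fun h => mem_compl.1 hj (h ▸ hp)
  obtain ⟨k, hk, hpath⟩ := hchain i
  have hkC : k ∈ C := by
    clear hk
    induction hpath with
    | refl => exact hi
    | tail _ hpq ih => exact hclosed _ _ ih hpq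
  linarith [(hout k hkC).2]

theorem nonneg_of_vecMul_add_eq_zero {b x : n → ℝ} (hb : 0 ≤ b) (hx : x ᵥ* A + b = 0) :
    0 ≤ x := by
  intro i
  by_contra! hi
  set C : Finset n := {j | x j < 0}
  obtain ⟨p, hp, hneg⟩ := exists_mem_sum_neg hM hrow hchain (C := C) (by simpa [C] using hi)
  have hterm : ∀ i ∈ univ, 0 ≤ x i * ∑ j ∈ C, A i j := fun i _ => by
    by_cases hxi : x i < 0
    · have := sum_add_sum_compl C (A i)
      have := hM.sum_nonneg_of_notMem (C := Cᶜ) (notMem_compl.2 (by simpa [C] using hxi))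
      nlinarith [hrow i]
    · exact mul_nonneg (not_lt.1 hxi) (hM.sum_nonneg_of_notMem (by simpa [C] using hxi))
  have hpos : 0 < ∑ i, x i * ∑ j ∈ C, A i j :=
    sum_pos' hterm ⟨p, mem_univ p, mul_pos_of_neg_of_neg (by simpa [C] using hp) hneg⟩
  have hbal := Matrix.sum_mul_sum_add_sum_eq_zero hx C
  linarith [sum_nonneg fun j (_ : j ∈ C) => hb j]

end Matrix.IsMetzler

theorem eq_zero_or_eq_single_of_sum_le_one_s13 {ι : Type*} [Fintype ι] [DecidableEq ι] {y : ι → ℝ}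
    (hy : ∀ i, ∃ n : ℕ, y i = n) (hs : ∑ i, y i ≤ 1) : y = 0 ∨ ∃ i, y = Pi.single i 1 := by
  have hnn : ∀ i, 0 ≤ y i := fun i => by obtain ⟨n, hn⟩ := hy i; rw [hn]; positivity
  by_cases h : y = 0
  · exact .inl h
  obtain ⟨i, hi : y i ≠ 0⟩ := Function.ne_iff.1 h
  have hi1 : 1 ≤ y i := by
    obtain ⟨n, hn⟩ := hy i
    rw [hn] at hi ⊢
    exact_mod_cast Nat.one_le_iff_ne_zero.2 (by exact_mod_cast hi)
  have hsplit := add_sum_erase univ y (mem_univ i)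
  have hrest : ∑ j ∈ univ.erase i, y j = 0 := by
    linarith [sum_nonneg fun j (_ : j ∈ univ.erase i) => hnn j]
  refine .inr ⟨i, funext fun j => ?_⟩
  rcases eq_or_ne j i with rfl | hj
  · rw [Pi.single_eq_same]; linarith
  · rw [Pi.single_eq_of_ne hj]
    exact (sum_eq_zero_iff_of_nonneg fun j _ => hnn j).1 hrest j (mem_erase.2 ⟨hj, mem_univ j⟩)

theorem eq_zero_of_sum_mul_eq_zero {α : Type*} {s : Finset α} {κ f : α → ℝ}
    (hκ : ∀ e ∈ s, 0 < κ e) (hf : ∀ e ∈ s, 0 ≤ f e) (h : ∑ e ∈ s, κ e * f e = 0) {e : α}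
    (he : e ∈ s) : f e = 0 :=
  (mul_eq_zero.1 ((sum_eq_zero_iff_of_nonneg fun e he => mul_nonneg (hκ e he).le (hf e he)).1
    h e he)).resolve_left (hκ e he).ne'

section ReactionGraph

variable {d : ℕ} {E : Finset (Edge d)}

theorem dotProduct_indicator (C : Finset (Fin d)) (y : Vec d) :
    y ⬝ᵥ (fun j => if j ∈ C then 1 else 0) = ∑ j ∈ C, y j := by
  simp [dotProduct]

theorem Endotactic.sum_le_of_maximal (hendo : Endotactic E) (C : Finset (Fin d)) {y y' : Vec d}
    (he : (y, y') ∈ E)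
    (hmax : ∀ z w, (z, w) ∈ E → ∑ j ∈ C, w j ≠ ∑ j ∈ C, z j → ∑ j ∈ C, z j ≤ ∑ j ∈ C, y j) :
    ∑ j ∈ C, y' j ≤ ∑ j ∈ C, y j := by
  by_contra! hlt
  refine hendo (fun j => if j ∈ C then 1 else 0) ⟨y, y', he, ?_, ?_⟩
  · rw [sub_dotProduct, dotProduct_indicator, dotProduct_indicator]
    linarith
  · rintro z ⟨w, hzw, hne⟩
    rw [sub_dotProduct, dotProduct_indicator, dotProduct_indicator, sub_ne_zero] at hne
    rw [dotProduct_indicator, dotProduct_indicator]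
    exact hmax z w hzw hne

theorem Endotactic.le_sum_of_minimal (hendo : Endotactic E) (C : Finset (Fin d)) {y y' : Vec d}
    (he : (y, y') ∈ E)
    (hmin : ∀ z w, (z, w) ∈ E → ∑ j ∈ C, w j ≠ ∑ j ∈ C, z j → ∑ j ∈ C, y j ≤ ∑ j ∈ C, z j) :
    ∑ j ∈ C, y j ≤ ∑ j ∈ C, y' j := by
  by_contra! hlt
  refine hendo (-fun j => if j ∈ C then 1 else 0) ⟨y, y', he, ?_, ?_⟩
  · rw [dotProduct_neg, sub_dotProduct, dotProduct_indicator, dotProduct_indicator]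
    linarith
  · rintro z ⟨w, hzw, hne⟩
    rw [dotProduct_neg, sub_dotProduct, dotProduct_indicator, dotProduct_indicator, neg_ne_zero,
      sub_ne_zero] at hne
    rw [dotProduct_neg, dotProduct_neg, dotProduct_indicator, dotProduct_indicator, neg_le_neg_iff]
    exact hmin z w hzw hne

theorem WReach.eq_of_conserved {β : Type*} (f : Vec d → β) (hf : ∀ e ∈ E, f e.2 = f e.1)
    {y z : Vec d} (h : WReach E y z) : f y = f z := by
  induction h with
  | refl => rfl
  | tail _ hbc ih =>
    rcases hbc with hbc | hcb
    · exact ih.trans (hf _ hbc).symm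
    · exact ih.trans (hf _ hcb)

variable (hnat : ∀ y, InV E y → ∀ i, ∃ n : ℕ, y i = (n : ℝ))
  (hfo : ∀ y, IsSource E y → ∑ i, y i ≤ 1) (hendo : Endotactic E)

include hnat in
theorem sum_coord_nonneg {y : Vec d} (hy : InV E y) (C : Finset (Fin d)) :
    0 ≤ ∑ j ∈ C, y j :=
  sum_nonneg fun j _ => by obtain ⟨n, hn⟩ := hnat y hy j; rw [hn]; positivity

include hnat hfo in
theorem source_eq_zero_or_single {y : Vec d} (hy : IsSource E y) :
    y = 0 ∨ ∃ i, y = Pi.single i 1 :=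
  let ⟨_, he⟩ := hy
  eq_zero_or_eq_single_of_sum_le_one_s13 (hnat y ⟨_, he, .inl rfl⟩) (hfo y hy)

include hfo hendo in
theorem sum_target_le_one {i : Fin d} {y' : Vec d} (he : (Pi.single i 1, y') ∈ E) :
    ∑ j, y' j ≤ 1 := by
  simpa using hendo.sum_le_of_maximal univ he fun z w hzw _ => by simpa using hfo z ⟨w, hzw⟩

include hnat hfo hendo in
theorem target_eq_zero_or_single {i : Fin d} {y' : Vec d} (he : (Pi.single i 1, y') ∈ E) :
    y' = 0 ∨ ∃ j, y' = Pi.single j 1 :=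
  eq_zero_or_eq_single_of_sum_le_one_s13 (hnat y' ⟨_, he, .inr rfl⟩) (sum_target_le_one hfo hendo he)

include hnat hfo hendo in
theorem isSource_single (hnored : ∀ i : Fin d, ∃ e ∈ E, e.2 i ≠ e.1 i) (i : Fin d) :
    IsSource E (Pi.single i 1) := by
  by_contra hsrc
  have hzero : ∀ z, IsSource E z → z i = 0 := fun z hz => by
    rcases source_eq_zero_or_single hnat hfo hz with rfl | ⟨k, rfl⟩
    · rfl
    · exact Pi.single_eq_of_ne (fun hik => hsrc (by subst hik; exact hz)) 1
  obtain ⟨⟨y, y'⟩, he, hne⟩ := hnored i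
  have hy := hzero y ⟨y', he⟩
  have hle : y' i ≤ y i := by
    simpa using hendo.sum_le_of_maximal {i} he fun z w hzw _ => by
      simp [hzero z ⟨w, hzw⟩, hy]
  have hnn := sum_coord_nonneg hnat ⟨_, he, .inr rfl⟩ {i}
  simp only [sum_singleton] at hnn
  exact hne (by simp only at hy ⊢; linarith)

include hnat hfo hendo in
theorem reach_single_zero (hnored : ∀ i : Fin d, ∃ e ∈ E, e.2 i ≠ e.1 i) (h0 : InV E 0)
    (hconn : ∀ y z, InV E y → InV E z → WReach E y z) (i : Fin d) :
    Reach E (Pi.single i 1) 0 := by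
  by_contra hi
  set C : Finset (Fin d) := {j | ¬ Reach E (Pi.single j 1) 0}
  have hclosed : ∀ j ∈ C, ∀ y', (Pi.single j 1, y') ∈ E → ∃ k ∈ C, y' = Pi.single k 1 := by
    intro j hj y' he
    have hj' : ¬ Reach E (Pi.single j 1) 0 := by simpa [C] using hj
    rcases target_eq_zero_or_single hnat hfo hendo he with rfl | ⟨k, rfl⟩
    · exact absurd (.single he) hj'
    · exact ⟨k, by simpa [C] using fun hk : Reach E _ 0 => hj' (.head he hk), rfl⟩
  -- Only sources outside `C` (of `C`-mass zero) can change the `C`-mass.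
  have hchange : ∀ z w, (z, w) ∈ E → ∑ j ∈ C, w j ≠ ∑ j ∈ C, z j → ∑ j ∈ C, z j = 0 := by
    intro z w hzw hne
    rcases source_eq_zero_or_single hnat hfo ⟨w, hzw⟩ with rfl | ⟨k, rfl⟩
    · simp
    · by_cases hk : k ∈ C
      · obtain ⟨m, hm, rfl⟩ := hclosed k hk w hzw
        simp [hk, hm] at hne
      · simp [hk]
  have hconserved : ∀ e ∈ E, ∑ j ∈ C, e.2 j = ∑ j ∈ C, e.1 j := by
    rintro ⟨y, y'⟩ he
    by_contra hne
    have hy := hchange y y' he hne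
    have hle := hendo.sum_le_of_maximal C he fun z w hzw hne' =>
      ((hchange z w hzw hne').trans hy.symm).le
    have hnn := sum_coord_nonneg hnat ⟨_, he, .inr rfl⟩ C
    exact hne (by simp only at hle hnn ⊢; linarith)
  obtain ⟨y', he⟩ := isSource_single hnat hfo hendo hnored i
  have := (hconn 0 _ h0 ⟨_, he, .inl rfl⟩).eq_of_conserved (fun y => ∑ j ∈ C, y j) hconserved
  simp [C, hi] at this

include hnat hfo hendo in
theorem one_le_sum_target_of_inflow_eq_zero {C : Finset (Fin d)}
    (h0C : ∀ w, (0, w) ∈ E → ∑ j ∈ C, w j = 0)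
    (houtC : ∀ k ∉ C, ∀ w, (Pi.single k 1, w) ∈ E → ∑ j ∈ C, w j = 0)
    {i : Fin d} (hi : i ∈ C) {y' : Vec d} (he : (Pi.single i 1, y') ∈ E) :
    1 ≤ ∑ j ∈ C, y' j := by
  have hmin : ∀ z w, (z, w) ∈ E → ∑ j ∈ C, w j ≠ ∑ j ∈ C, z j →
      ∑ j ∈ C, (Pi.single i 1 : Vec d) j ≤ ∑ j ∈ C, z j := by
    intro z w hzw hne
    rcases source_eq_zero_or_single hnat hfo ⟨w, hzw⟩ with rfl | ⟨k, rfl⟩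
    · simp [h0C w hzw] at hne
    · by_cases hk : k ∈ C
      · simp [hi, hk]
      · simp [houtC k hk w hzw, hk] at hne
  simpa [hi] using hendo.le_sum_of_minimal C he hmin

end ReactionGraph

section FluxMatrix

variable {d : ℕ} {E : Finset (Edge d)} {κ : Edge d → ℝ} {A : Matrix (Fin d) (Fin d) ℝ}
  {b : Vec d}
  (hnat : ∀ y, InV E y → ∀ i, ∃ n : ℕ, y i = (n : ℝ))
  (hfo : ∀ y, IsSource E y → ∑ i, y i ≤ 1) (hendo : Endotactic E)
  (hκ : ∀ e ∈ E, 0 < κ e)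
  (hA : ∀ i j, A i j =
    ∑ e ∈ E.filter (fun e => e.1 = (Pi.single i 1 : Vec d)), κ e * (e.2 j - e.1 j))
  (hb : ∀ i, b i = ∑ e ∈ E.filter (fun e => e.1 = (0 : Vec d)), κ e * e.2 i)

include hA in
theorem sum_flux_eq (C : Finset (Fin d)) (i : Fin d) :
    ∑ j ∈ C, A i j = ∑ e ∈ E.filter (fun e => e.1 = (Pi.single i 1 : Vec d)),
      κ e * (∑ j ∈ C, e.2 j - if i ∈ C then 1 else 0) := by
  simp only [hA]
  rw [sum_comm]
  refine sum_congr rfl fun e he => ?_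
  rw [(mem_filter.1 he).2, ← sum_pi_single', ← sum_sub_distrib, mul_sum]

include hb in
theorem sum_inflow_eq (C : Finset (Fin d)) :
    ∑ j ∈ C, b j = ∑ e ∈ E.filter (fun e => e.1 = (0 : Vec d)), κ e * ∑ j ∈ C, e.2 j := by
  simp only [hb, mul_sum]
  exact sum_comm

include hnat hκ hb in
theorem inflow_nonneg : 0 ≤ b := fun i => by
  rw [Pi.zero_apply, ← sum_singleton b i, sum_inflow_eq hb]
  exact sum_nonneg fun e he => mul_nonneg (hκ e (mem_filter.1 he).1).le
    (sum_coord_nonneg hnat ⟨e, (mem_filter.1 he).1, .inr rfl⟩ {i})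

include hnat hκ in
theorem flux_term_nonneg {i j : Fin d} (hij : i ≠ j) :
    ∀ e ∈ E.filter (fun e => e.1 = (Pi.single i 1 : Vec d)), 0 ≤ κ e * (e.2 j - e.1 j) := by
  intro e he
  obtain ⟨he, he1⟩ := mem_filter.1 he
  rw [he1, Pi.single_eq_of_ne hij.symm, sub_zero]
  simpa using mul_nonneg (hκ e he).le (sum_coord_nonneg hnat ⟨e, he, .inr rfl⟩ {j})

include hnat hκ hA in
theorem flux_isMetzler : A.IsMetzler := fun i j hij => by
  rw [hA]
  exact sum_nonneg (flux_term_nonneg hnat hκ hij)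

include hnat hκ hA in
theorem flux_pos_of_mem {i j : Fin d} (hij : i ≠ j)
    (he : ((Pi.single i 1 : Vec d), (Pi.single j 1 : Vec d)) ∈ E) : 0 < A i j := by
  rw [hA]
  exact sum_pos' (flux_term_nonneg hnat hκ hij) ⟨_, mem_filter.2 ⟨he, rfl⟩, by simp [hij, hκ _ he]⟩

include hfo hendo hκ in
theorem flux_row_term_nonpos (i : Fin d) :
    ∀ e ∈ E.filter (fun e => e.1 = (Pi.single i 1 : Vec d)),
      κ e * (∑ j, e.2 j - if i ∈ univ then 1 else 0) ≤ 0 := by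
  rintro ⟨y, y'⟩ he
  obtain ⟨he, rfl⟩ := mem_filter.1 he
  exact mul_nonpos_of_nonneg_of_nonpos (hκ _ he).le
    (by simpa using sum_target_le_one hfo hendo he)

include hfo hendo hκ hA in
theorem flux_row_sum_nonpos (i : Fin d) : ∑ j, A i j ≤ 0 := by
  rw [sum_flux_eq hA]
  exact sum_nonpos (flux_row_term_nonpos hfo hendo hκ i)

include hfo hendo hκ hA in
theorem flux_row_sum_neg_of_mem {i : Fin d} (he : ((Pi.single i 1 : Vec d), 0) ∈ E) :
    ∑ j, A i j < 0 := by
  rw [sum_flux_eq hA]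
  exact sum_neg' (flux_row_term_nonpos hfo hendo hκ i)
    ⟨_, mem_filter.2 ⟨he, rfl⟩, by simpa using hκ _ he⟩

include hnat hfo hendo hκ hA in
theorem flux_exists_row_sum_neg_reach (hnored : ∀ i : Fin d, ∃ e ∈ E, e.2 i ≠ e.1 i)
    (h0 : InV E 0) (hconn : ∀ y z, InV E y → InV E z → WReach E y z) (i : Fin d) :
    ∃ k, ∑ j, A k j < 0 ∧ ReflTransGen (fun p q => p ≠ q ∧ A p q ≠ 0) i k := by
  suffices h : ∀ y, Reach E y 0 → ∀ i, y = Pi.single i 1 →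
      ∃ k, ∑ j, A k j < 0 ∧ ReflTransGen (fun p q => p ≠ q ∧ A p q ≠ 0) i k from
    h _ (reach_single_zero hnat hfo hendo hnored h0 hconn i) i rfl
  intro y hy
  induction hy using Relation.ReflTransGen.head_induction_on with
  | refl => exact fun i hi => absurd hi.symm (by simp)
  | head he _ ih =>
    rintro i rfl
    rcases target_eq_zero_or_single hnat hfo hendo he with rfl | ⟨j, rfl⟩
    · exact ⟨i, flux_row_sum_neg_of_mem hfo hendo hκ hA he, .refl⟩
    · obtain ⟨k, hk, hpath⟩ := ih j rfl
      rcases eq_or_ne i j with rfl | hij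
      · exact ⟨k, hk, hpath⟩
      · exact ⟨k, hk, .head ⟨hij, (flux_pos_of_mem hnat hκ hA hij he).ne'⟩ hpath⟩

include hnat hfo hendo hκ hA hb in
theorem flux_equilibrium_pos (hnored : ∀ i : Fin d, ∃ e ∈ E, e.2 i ≠ e.1 i) (h0 : InV E 0)
    (hconn : ∀ y z, InV E y → InV E z → WReach E y z) {x : Vec d} (hx : x ᵥ* A + b = 0)
    (i : Fin d) : 0 < x i := by
  have hM := flux_isMetzler hnat hκ hA
  have hrow := flux_row_sum_nonpos hfo hendo hκ hA
  have hchain := flux_exists_row_sum_neg_reach hnat hfo hendo hκ hA hnored h0 hconn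
  have hb0 := inflow_nonneg hnat hκ hb
  have hx0 := hM.nonneg_of_vecMul_add_eq_zero hrow hchain hb0 hx
  refine (hx0 i).lt_of_ne' fun hi => ?_
  set C : Finset (Fin d) := {j | x j = 0}
  obtain ⟨hbC, hAC⟩ := hM.sum_zeroSet_eq_zero hb0 hx0 hx
  have h0C : ∀ w, (0, w) ∈ E → ∑ j ∈ C, w j = 0 := fun w hw => by
    rw [sum_inflow_eq hb] at hbC
    exact eq_zero_of_sum_mul_eq_zero (fun e he => hκ e (mem_filter.1 he).1)
      (fun e he => sum_coord_nonneg hnat ⟨e, (mem_filter.1 he).1, .inr rfl⟩ C) hbC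
      (mem_filter.2 ⟨hw, rfl⟩)
  have houtC : ∀ k ∉ C, ∀ w, (Pi.single k 1, w) ∈ E → ∑ j ∈ C, w j = 0 := fun k hk w hw => by
    have := hAC k ((hx0 k).lt_of_ne' (by simpa [C] using hk))
    rw [sum_flux_eq hA, if_neg hk] at this
    simpa using eq_zero_of_sum_mul_eq_zero (fun e he => hκ e (mem_filter.1 he).1)
      (fun e he => by simpa using sum_coord_nonneg hnat ⟨e, (mem_filter.1 he).1, .inr rfl⟩ C)
      this (mem_filter.2 ⟨hw, rfl⟩)
  obtain ⟨p, hp, hneg⟩ := hM.exists_mem_sum_neg hrow hchain (C := C) (by simpa [C] using hi)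
  rw [sum_flux_eq hA, if_pos hp] at hneg
  refine hneg.not_ge (sum_nonneg fun ⟨y, y'⟩ he => ?_)
  obtain ⟨he, rfl⟩ := mem_filter.1 he
  exact mul_nonneg (hκ _ he).le
    (sub_nonneg.2 (one_le_sum_target_of_inflow_eq_zero hnat hfo hendo h0C houtC hp he))

end FluxMatrix

theorem stmt13_general {d : ℕ} (E : Finset (Edge d)) (κ : Edge d → ℝ)
    (hκ : ∀ e ∈ E, 0 < κ e)
    (hnat : ∀ y, InV E y → ∀ i, ∃ n : ℕ, y i = (n : ℝ))
    (hfo : ∀ y, IsSource E y → ∑ i, y i ≤ 1)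
    (hnored : ∀ i : Fin d, ∃ e ∈ E, e.2 i ≠ e.1 i)
    (hendo : Endotactic E)
    (h0 : InV E (0 : Vec d))
    (hconn : ∀ y z, InV E y → InV E z → WReach E y z)
    (A : Matrix (Fin d) (Fin d) ℝ)
    (hA : ∀ i j, A i j =
      ∑ e ∈ E.filter (fun e => e.1 = (Pi.single i 1 : Vec d)), κ e * (e.2 j - e.1 j))
    (b : Vec d)
    (hb : ∀ i, b i = ∑ e ∈ E.filter (fun e => e.1 = (0 : Vec d)), κ e * e.2 i) :
    (∀ i j, i ≠ j → 0 ≤ A i j) ∧ WCDD A ∧ A.det ≠ 0 ∧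
    (∀ μ : ℂ, IsEig A μ → μ.re < 0) ∧
    (∀ y : Vec d, y ᵥ* A + b = 0 ↔ y = b ᵥ* (-A)⁻¹) ∧
    (∀ i, 0 < (b ᵥ* (-A)⁻¹) i) := by
  have hM := flux_isMetzler hnat hκ hA
  have hrow := flux_row_sum_nonpos hfo hendo hκ hA
  have hW := hM.wcdd hrow (flux_exists_row_sum_neg_reach hnat hfo hendo hκ hA hnored h0 hconn)
  have hequil := Matrix.vecMul_add_eq_zero_iff hW.det_ne_zero b
  refine ⟨hM, hW, hW.det_ne_zero, fun μ => hW.re_neg_of_isEig fun i => hM.diag_nonpos (hrow i),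
    hequil, flux_equilibrium_pos hnat hfo hendo hκ hA hb hnored h0 hconn ((hequil _).2 rfl)⟩

/-- For a first order endotactic mass-action system whose reaction graph is
weakly connected and contains the zero complex, the average flux matrix `A` is
Metzler and WCDD, hence nonsingular with all eigenvalues of negative real part,
and `x_* = b(−A)⁻¹` is the unique equilibrium of `ẋ = xA + b`; moreover it is
entrywise strictly positive. -/
theorem stmt13 {d : ℕ} (E : Finset (Edge d)) (κ : Edge d → ℝ)
    (hsimple : ∀ e ∈ E, e.1 ≠ e.2)
    (hκ : ∀ e ∈ E, 0 < κ e)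
    (hnat : ∀ y, InV E y → ∀ i, ∃ n : ℕ, y i = (n : ℝ))
    (hfo : ∀ y, IsSource E y → ∑ i, y i ≤ 1)
    (hnored : ∀ i : Fin d, ∃ e ∈ E, e.2 i ≠ e.1 i)
    (hendo : Endotactic E)
    (h0 : InV E (0 : Vec d))
    (hconn : ∀ y z, InV E y → InV E z → WReach E y z)
    (A : Matrix (Fin d) (Fin d) ℝ)
    (hA : ∀ i j, A i j =
      ∑ e ∈ E.filter (fun e => e.1 = (Pi.single i 1 : Vec d)), κ e * (e.2 j - e.1 j))
    (b : Vec d)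
    (hb : ∀ i, b i = ∑ e ∈ E.filter (fun e => e.1 = (0 : Vec d)), κ e * e.2 i) :
    (∀ i j, i ≠ j → 0 ≤ A i j) ∧ WCDD A ∧ A.det ≠ 0 ∧
    (∀ μ : ℂ, IsEig A μ → μ.re < 0) ∧
    (∀ y : Vec d, y ᵥ* A + b = 0 ↔ y = b ᵥ* (-A)⁻¹) ∧
    (∀ i, 0 < (b ᵥ* (-A)⁻¹) i) :=
  stmt13_general E κ hκ hnat hfo hnored hendo h0 hconn A hA b hb
end

section
/- Let L be the (out-degree) Laplacian of a finite weighted strongly connected directed graph on vertex set {0, 1, ..., d} with positive edge weights: L_{ij} = −κ_{ij} for i ≠ j (κ_{ij} ≥ 0, = 0 if no edge) and L_{ii} = Σ_{ℓ≠i} κ_{iℓ}. Let c_ℓ > 0 be the sum, over all spanning trees rooted at ℓ with all edges directed toward ℓ, of the products of their edge weights. Write A = (−L_{ij})_{i,j∈[d]} (deleting row and column 0) and b = (−L_{01}, ..., −L_{0d}). Then A is nonsingular and the unique solution x of xA + b = 0 is x_ℓ = c_ℓ/c_0 for ℓ ∈ [d]; in particular x is entrywise positive. -/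
open Matrix Finset
open scoped Matrix Classical

/-- Sum, over all spanning trees of the weighted digraph `κ` rooted at `r`
(every non-root vertex `v` has a unique chosen out-edge `v → f v` and iterating
the choice reaches the root), of the products of the edge weights. -/
noncomputable def treeSum (d : ℕ) (κ : Fin (d + 1) → Fin (d + 1) → ℝ)
    (r : Fin (d + 1)) : ℝ :=
  ∑ f ∈ (Finset.univ : Finset (Fin (d + 1) → Fin (d + 1))).filter
      (fun f => f r = r ∧ (∀ v, v ≠ r → 0 < κ v (f v)) ∧ ∀ v, ∃ n, f^[n] v = r),
    ∏ v ∈ Finset.univ.erase r, κ v (f v)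


namespace Stmt14Aux

lemma iterate_agree {α : Type*} {f g : α → α} {a : α}
    (hfg : ∀ v, v ≠ a → f v = g v) {v : α} : ∀ {n : ℕ},
    (∀ k < n, g^[k] v ≠ a) → f^[n] v = g^[n] v := by
  intro n
  induction n with
  | zero => intro _; rfl
  | succ n ih =>
    intro h
    rw [Function.iterate_succ_apply', Function.iterate_succ_apply',
      ih (fun k hk => h k (Nat.lt_succ_of_lt hk)),
      hfg _ (h n (Nat.lt_succ_self n))]

lemma reach_transfer {α : Type*} {f g : α → α} {a : α}
    (hfg : ∀ v, v ≠ a → f v = g v) {v : α} (h : ∃ n, g^[n] v = a) :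
    ∃ n, f^[n] v = a := by
  classical
  refine ⟨Nat.find h, ?_⟩
  rw [iterate_agree hfg (fun k hk => Nat.find_min h hk)]
  exact Nat.find_spec h

def reachN {α : Type*} (R : α → α → Prop) (r : α) : ℕ → α → Prop
  | 0, v => v = r
  | n+1, v => ∃ w, R v w ∧ reachN R r n w

lemma reach_exists {α : Type*} (R : α → α → Prop) (r : α) {v : α}
    (h : Relation.ReflTransGen R v r) : ∃ n, reachN R r n v := by
  induction h using Relation.ReflTransGen.head_induction_on with
  | refl => exact ⟨0, rfl⟩
  | head hab _ ih => obtain ⟨n, hn⟩ := ih; exact ⟨n+1, _, hab, hn⟩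

section Tree
variable {d : ℕ} (κ : Fin (d + 1) → Fin (d + 1) → ℝ)

/-- the finset of spanning trees rooted at `r` -/
noncomputable def Tf (r : Fin (d + 1)) : Finset (Fin (d + 1) → Fin (d + 1)) :=
  (Finset.univ : Finset (Fin (d + 1) → Fin (d + 1))).filter
      (fun f => f r = r ∧ (∀ v, v ≠ r → 0 < κ v (f v)) ∧ ∀ v, ∃ n, f^[n] v = r)

lemma treeSum_eq (r : Fin (d+1)) :
    treeSum d κ r = ∑ f ∈ Tf κ r, ∏ v ∈ Finset.univ.erase r, κ v (f v) := rfl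

lemma Tf_nonempty (hconn : ∀ i j : Fin (d + 1),
    Relation.ReflTransGen (fun a b => 0 < κ a b) i j) (r : Fin (d+1)) :
    (Tf κ r).Nonempty := by
  classical
  set R : Fin (d+1) → Fin (d+1) → Prop := fun a b => 0 < κ a b with hR
  have hex : ∀ v, ∃ n, reachN R r n v := fun v => reach_exists R r (hconn v r)
  set N : Fin (d+1) → ℕ := fun v => Nat.find (hex v) with hN
  have hstep : ∀ v, v ≠ r → ∃ w, R v w ∧ N w < N v := by
    intro v hv
    have hNv : N v ≠ 0 := by
      intro h0
      exact hv (by simpa [reachN] using (Nat.find_eq_zero (hex v)).mp h0)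
    obtain ⟨m, hm⟩ := Nat.exists_eq_succ_of_ne_zero hNv
    have hspec : reachN R r (N v) v := Nat.find_spec (hex v)
    rw [hm] at hspec
    obtain ⟨w, hw, hwm⟩ := hspec
    exact ⟨w, hw, lt_of_le_of_lt (Nat.find_min' (hex w) hwm) (by omega)⟩
  set f : Fin (d+1) → Fin (d+1) := fun v =>
    if h : v = r then r else Classical.choose (hstep v h) with hf
  have hfr : f r = r := by simp [hf]
  have hfpos : ∀ v, v ≠ r → 0 < κ v (f v) := by
    intro v hv
    have := (Classical.choose_spec (hstep v hv)).1
    simpa [hf, hv] using this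
  have hfdec : ∀ v, v ≠ r → N (f v) < N v := by
    intro v hv
    have := (Classical.choose_spec (hstep v hv)).2
    simpa [hf, hv] using this
  have hreach : ∀ k v, N v ≤ k → ∃ n, f^[n] v = r := by
    intro k
    induction k with
    | zero =>
      intro v hv
      have h0 : N v = 0 := Nat.le_zero.mp hv
      have : reachN R r (N v) v := Nat.find_spec (hex v)
      rw [h0] at this
      exact ⟨0, this⟩
    | succ k ih =>
      intro v hv
      by_cases h : v = r
      · exact ⟨0, h⟩
      · obtain ⟨n, hn⟩ := ih (f v) (by have := hfdec v h; omega)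
        exact ⟨n+1, by rwa [Function.iterate_succ_apply]⟩
  refine ⟨f, ?_⟩
  simp only [Tf, Finset.mem_filter, Finset.mem_univ, true_and]
  exact ⟨hfr, hfpos, fun v => hreach (N v) v le_rfl⟩

lemma treeSum_pos (hκ : ∀ i j, 0 ≤ κ i j) (hconn : ∀ i j : Fin (d + 1),
    Relation.ReflTransGen (fun a b => 0 < κ a b) i j) (r : Fin (d+1)) :
    0 < treeSum d κ r := by
  rw [treeSum_eq]
  refine Finset.sum_pos (fun f hf => ?_) (Tf_nonempty κ hconn r)
  simp only [Tf, Finset.mem_filter, Finset.mem_univ, true_and] at hf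
  exact Finset.prod_pos fun v hv => hf.2.1 v (Finset.mem_erase.mp hv).1

/-- the predecessor of `j` on the unique cycle of the functional graph `g`
(junk value `j` if the orbit of `j` is not periodic) -/
noncomputable def cyc (g : Fin (d+1) → Fin (d+1)) (j : Fin (d+1)) : Fin (d+1) :=
  if h : ∃ n, g^[n+1] j = j then g^[Nat.find h] j else j

lemma cyc_update (f : Fin (d+1) → Fin (d+1)) (ℓ j : Fin (d+1)) (hℓ : ℓ ≠ j)
    (hfℓ : f ℓ = ℓ) (hreach : ∀ v, ∃ n, f^[n] v = ℓ) :
    cyc (Function.update f ℓ j) j = ℓ := by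
  classical
  set g := Function.update f ℓ j with hg
  have hgℓ : g ℓ = j := Function.update_self ℓ j f
  have hagree : ∀ v, v ≠ ℓ → f v = g v := fun v hv =>
    (Function.update_of_ne hv j f).symm
  have hagree' : ∀ v, v ≠ ℓ → g v = f v := fun v hv => (hagree v hv).symm
  have hp : ∃ n, g^[n+1] j = j := by
    obtain ⟨n, hn⟩ := reach_transfer hagree' (hreach j)
    exact ⟨n, by rw [Function.iterate_succ_apply', hn, hgℓ]⟩
  rw [cyc, dif_pos hp]
  set p := Nat.find hp with hpdef
  have hspec : g^[p+1] j = j := Nat.find_spec hp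
  by_cases hc : ∃ i, i ≤ p ∧ g^[i] j = ℓ
  · obtain ⟨i, hip, hi⟩ := hc
    have : g^[i+1] j = j := by rw [Function.iterate_succ_apply', hi, hgℓ]
    have hpi : p ≤ i := Nat.find_min' hp this
    have : i = p := le_antisymm hip hpi
    rwa [← this]
  · exfalso
    push_neg at hc
    -- the f-orbit of j is periodic with period p+1 and avoids ℓ
    have hfg_iter : ∀ n, n ≤ p + 1 → f^[n] j = g^[n] j := by
      intro n hn
      exact iterate_agree hagree (fun k hk => hc k (by omega))
    have hper : f^[p+1] j = j := by rw [hfg_iter (p+1) le_rfl]; exact hspec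
    have hcycle : ∀ q, f^[q * (p+1)] j = j := by
      intro q
      induction q with
      | zero => simp
      | succ q ih =>
        have : (q+1) * (p+1) = q * (p+1) + (p+1) := by ring
        rw [this, Function.iterate_add_apply, hper, ih]
    have horbit : ∀ n, f^[n] j ≠ ℓ := by
      intro n
      have hn : n = n % (p+1) + (n / (p+1)) * (p+1) := by
        conv_lhs => rw [← Nat.mod_add_div n (p+1)]
        ring
      have hlt : n % (p+1) < p + 1 := Nat.mod_lt n (by omega)
      rw [hn, Function.iterate_add_apply, hcycle, hfg_iter _ (by omega)]
      exact hc _ (by omega)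
    obtain ⟨n, hn⟩ := hreach j
    exact horbit n hn


section Kernel
variable (hκ : ∀ i j, 0 ≤ κ i j) (hdiag : ∀ i, κ i i = 0)

/-- functional graphs in which every vertex flows to `j` -/
noncomputable def Sg (j : Fin (d+1)) : Finset (Fin (d+1) → Fin (d+1)) :=
  (Finset.univ : Finset (Fin (d+1) → Fin (d+1))).filter
    (fun g => (∀ v, 0 < κ v (g v)) ∧ ∀ v, ∃ n, g^[n] v = j)

include hκ hdiag in
lemma lemA (j : Fin (d+1)) :
    ∑ g ∈ Sg κ j, ∏ v, κ v (g v) =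
      (∑ f ∈ Tf κ j, ∏ v ∈ Finset.univ.erase j, κ v (f v)) *
        ∑ m ∈ Finset.univ.erase j, κ j m := by
  classical
  have key : ∑ g ∈ Sg κ j, ∏ v, κ v (g v) =
      ∑ p ∈ (Finset.univ.filter (fun m => 0 < κ j m)).sigma (fun _ => Tf κ j),
        κ j p.1 * ∏ v ∈ Finset.univ.erase j, κ v (p.2 v) := by
    refine Finset.sum_nbij'
      (fun g => ⟨g j, Function.update g j j⟩)
      (fun p => Function.update p.2 j p.1) ?_ ?_ ?_ ?_ ?_
    · intro g hg
      simp only [Sg, Finset.mem_filter, Finset.mem_univ, true_and] at hg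
      obtain ⟨hpos, hreach⟩ := hg
      refine Finset.mem_sigma.mpr ⟨by simp [hpos j], ?_⟩
      simp only [Tf, Finset.mem_filter, Finset.mem_univ, true_and]
      refine ⟨Function.update_self _ _ _, fun v hv => ?_, fun v => ?_⟩
      · rw [Function.update_of_ne hv]; exact hpos v
      · exact reach_transfer (fun w hw => by rw [Function.update_of_ne hw]) (hreach v)
    · rintro ⟨m, f⟩ hp
      rw [Finset.mem_sigma] at hp
      obtain ⟨hm, hf⟩ := hp
      simp only [Finset.mem_filter, Finset.mem_univ, true_and] at hm
      simp only [Tf, Finset.mem_filter, Finset.mem_univ, true_and] at hf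
      obtain ⟨hfj, hfpos, hfreach⟩ := hf
      simp only [Sg, Finset.mem_filter, Finset.mem_univ, true_and]
      constructor
      · intro v
        by_cases hv : v = j
        · subst hv; rw [Function.update_self]; exact hm
        · rw [Function.update_of_ne hv]; exact hfpos v hv
      · intro v
        exact reach_transfer (fun w hw => by rw [Function.update_of_ne hw]) (hfreach v)
    · intro g hg
      simp only
      rw [Function.update_idem, Function.update_eq_self]
    · rintro ⟨m, f⟩ hp
      rw [Finset.mem_sigma] at hp
      obtain ⟨hm, hf⟩ := hp
      simp only [Tf, Finset.mem_filter, Finset.mem_univ, true_and] at hf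
      have h1 : Function.update f j m j = m := Function.update_self _ _ _
      have h2 : Function.update (Function.update f j m) j j = f := by
        rw [Function.update_idem]
        funext v
        by_cases hv : v = j
        · subst hv; simpa using hf.1.symm
        · rw [Function.update_of_ne hv]
      simp only
      rw [h1, h2]
    · intro g hg
      simp only
      rw [← Finset.mul_prod_erase Finset.univ (fun v => κ v (g v)) (Finset.mem_univ j)]
      congr 1
      refine Finset.prod_congr rfl (fun v hv => ?_)
      rw [Function.update_of_ne (Finset.mem_erase.mp hv).1]
  rw [key, Finset.sum_sigma]
  rw [Finset.sum_subset (s₁ := Finset.univ.filter (fun m => 0 < κ j m))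
    (s₂ := Finset.univ.erase j) ?_ ?_]
  · rw [Finset.sum_comm]
    rw [Finset.sum_mul]
    refine Finset.sum_congr rfl (fun f hf => ?_)
    rw [Finset.mul_sum]
    refine Finset.sum_congr rfl (fun m hm => ?_)
    ring
  · intro m hm
    simp only [Finset.mem_filter, Finset.mem_univ, true_and] at hm
    refine Finset.mem_erase.mpr ⟨?_, Finset.mem_univ m⟩
    intro h; subst h; rw [hdiag] at hm; exact lt_irrefl 0 hm
  · intro m hm hnm
    simp only [Finset.mem_filter, Finset.mem_univ, true_and] at hnm
    have : κ j m = 0 := le_antisymm (not_lt.mp hnm) (hκ j m)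
    simp [this]


lemma cyc_spec (hdiag : ∀ i, κ i i = 0) {j : Fin (d+1)} {g : Fin (d+1) → Fin (d+1)}
    (hpos : ∀ v, 0 < κ v (g v)) (hreach : ∀ v, ∃ n, g^[n] v = j) :
    g (cyc g j) = j ∧ cyc g j ≠ j ∧ ∀ v, ∃ n, g^[n] v = cyc g j := by
  classical
  have hp : ∃ n, g^[n+1] j = j := by
    obtain ⟨m, hm⟩ := hreach (g j)
    exact ⟨m, by rw [Function.iterate_succ_apply]; exact hm⟩
  have hcdef : cyc g j = g^[Nat.find hp] j := dif_pos hp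
  have h1 : g (cyc g j) = j := by
    have hs := Nat.find_spec hp
    rw [Function.iterate_succ_apply'] at hs
    rwa [hcdef]
  have h2 : cyc g j ≠ j := by
    intro h
    rw [h] at h1
    have := hpos j
    rw [h1, hdiag j] at this
    exact lt_irrefl 0 this
  refine ⟨h1, h2, fun v => ?_⟩
  obtain ⟨n, hn⟩ := hreach v
  exact ⟨Nat.find hp + n, by rw [Function.iterate_add_apply, hn, hcdef]⟩

include hκ hdiag in
lemma lemB (j : Fin (d+1)) :
    ∑ g ∈ Sg κ j, ∏ v, κ v (g v) =
      ∑ ℓ ∈ Finset.univ.erase j, κ ℓ j *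
        ∑ f ∈ Tf κ ℓ, ∏ v ∈ Finset.univ.erase ℓ, κ v (f v) := by
  classical
  have key : ∑ g ∈ Sg κ j, ∏ v, κ v (g v) =
      ∑ p ∈ (Finset.univ.filter (fun ℓ => ℓ ≠ j ∧ 0 < κ ℓ j)).sigma (fun ℓ => Tf κ ℓ),
        κ p.1 j * ∏ v ∈ Finset.univ.erase p.1, κ v (p.2 v) := by
    refine Finset.sum_nbij'
      (fun g => ⟨cyc g j, Function.update g (cyc g j) (cyc g j)⟩)
      (fun p => Function.update p.2 p.1 j) ?_ ?_ ?_ ?_ ?_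
    · intro g hg
      simp only [Sg, Finset.mem_filter, Finset.mem_univ, true_and] at hg
      obtain ⟨hpos, hreach⟩ := hg
      obtain ⟨h1, h2, h3⟩ := cyc_spec κ hdiag hpos hreach
      refine Finset.mem_sigma.mpr ⟨?_, ?_⟩
      · simp only [Finset.mem_filter, Finset.mem_univ, true_and]
        refine ⟨h2, ?_⟩
        have := hpos (cyc g j)
        rwa [h1] at this
      · simp only [Tf, Finset.mem_filter, Finset.mem_univ, true_and]
        refine ⟨Function.update_self _ _ _, fun v hv => ?_, fun v => ?_⟩
        · rw [Function.update_of_ne hv]; exact hpos v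
        · exact reach_transfer (fun w hw => by rw [Function.update_of_ne hw]) (h3 v)
    · rintro ⟨ℓ, f⟩ hp
      rw [Finset.mem_sigma] at hp
      obtain ⟨hℓ, hf⟩ := hp
      simp only [Finset.mem_filter, Finset.mem_univ, true_and] at hℓ
      simp only [Tf, Finset.mem_filter, Finset.mem_univ, true_and] at hf
      obtain ⟨hℓj, hκℓ⟩ := hℓ
      obtain ⟨hfℓ, hfpos, hfreach⟩ := hf
      simp only [Sg, Finset.mem_filter, Finset.mem_univ, true_and]
      constructor
      · intro v
        by_cases hv : v = ℓ
        · subst hv; rw [Function.update_self]; exact hκℓ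
        · rw [Function.update_of_ne hv]; exact hfpos v hv
      · intro v
        obtain ⟨n, hn⟩ := reach_transfer (f := Function.update f ℓ j) (g := f)
          (fun w hw => by rw [Function.update_of_ne hw]) (hfreach v)
        exact ⟨n+1, by rw [Function.iterate_succ_apply', hn, Function.update_self]⟩
    · intro g hg
      simp only [Sg, Finset.mem_filter, Finset.mem_univ, true_and] at hg
      obtain ⟨hpos, hreach⟩ := hg
      obtain ⟨h1, h2, h3⟩ := cyc_spec κ hdiag hpos hreach
      simp only
      rw [Function.update_idem]
      funext v
      by_cases hv : v = cyc g j
      · subst hv; rw [Function.update_self]; exact h1.symm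
      · rw [Function.update_of_ne hv]
    · rintro ⟨ℓ, f⟩ hp
      rw [Finset.mem_sigma] at hp
      obtain ⟨hℓ, hf⟩ := hp
      simp only [Finset.mem_filter, Finset.mem_univ, true_and] at hℓ
      simp only [Tf, Finset.mem_filter, Finset.mem_univ, true_and] at hf
      have hc : cyc (Function.update f ℓ j) j = ℓ :=
        cyc_update f ℓ j hℓ.1 hf.1 hf.2.2
      simp only
      rw [hc]
      have h2 : Function.update (Function.update f ℓ j) ℓ ℓ = f := by
        rw [Function.update_idem]
        funext v
        by_cases hv : v = ℓ
        · subst hv; simpa using hf.1.symm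
        · rw [Function.update_of_ne hv]
      rw [h2]
    · intro g hg
      simp only [Sg, Finset.mem_filter, Finset.mem_univ, true_and] at hg
      obtain ⟨hpos, hreach⟩ := hg
      obtain ⟨h1, h2, h3⟩ := cyc_spec κ hdiag hpos hreach
      simp only
      rw [← Finset.mul_prod_erase Finset.univ (fun v => κ v (g v))
        (Finset.mem_univ (cyc g j)), h1]
      congr 1
      refine Finset.prod_congr rfl (fun v hv => ?_)
      rw [Function.update_of_ne (Finset.mem_erase.mp hv).1]
  rw [key, Finset.sum_sigma]
  rw [Finset.sum_subset (s₁ := Finset.univ.filter (fun ℓ => ℓ ≠ j ∧ 0 < κ ℓ j))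
    (s₂ := Finset.univ.erase j) ?_ ?_]
  · refine Finset.sum_congr rfl (fun ℓ hℓ => ?_)
    rw [Finset.mul_sum]
  · intro ℓ hℓ
    simp only [Finset.mem_filter, Finset.mem_univ, true_and] at hℓ
    exact Finset.mem_erase.mpr ⟨hℓ.1, Finset.mem_univ ℓ⟩
  · intro ℓ hℓ hnℓ
    simp only [Finset.mem_filter, Finset.mem_univ, true_and] at hnℓ
    have hℓj := (Finset.mem_erase.mp hℓ).1
    have : κ ℓ j = 0 := le_antisymm (not_lt.mp (fun hlt => hnℓ ⟨hℓj, hlt⟩)) (hκ ℓ j)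
    simp [this]

include hκ hdiag in
lemma kernel_col (j : Fin (d+1)) :
    treeSum d κ j * (∑ m ∈ Finset.univ.erase j, κ j m)
      = ∑ ℓ ∈ Finset.univ.erase j, κ ℓ j * treeSum d κ ℓ := by
  simp only [treeSum_eq]
  exact (lemA κ hκ hdiag j).symm.trans (lemB κ hκ hdiag j)

end Kernel

lemma maxprin (hκ : ∀ i j, 0 ≤ κ i j) (hdiag : ∀ i, κ i i = 0)
    (hconn : ∀ i j : Fin (d + 1), Relation.ReflTransGen (fun a b => 0 < κ a b) i j)
    (u : Fin (d+1) → ℝ) (h0 : u 0 = 0)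
    (hrow : ∀ i : Fin (d+1), i ≠ 0 →
      (∑ m ∈ Finset.univ.erase i, κ i m) * u i
        = ∑ m ∈ Finset.univ.erase i, κ i m * u m) :
    ∀ v, u v ≤ 0 := by
  classical
  obtain ⟨i₀, -, hmax⟩ := Finset.exists_max_image Finset.univ u Finset.univ_nonempty
  have claim : ∀ a : Fin (d+1),
      Relation.ReflTransGen (fun a b => 0 < κ a b) a 0 → u a = u i₀ → u 0 = u i₀ := by
    intro a h
    induction h using Relation.ReflTransGen.head_induction_on with
    | refl => exact fun h => h
    | @head a' c' hac hc ih =>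
      intro ha
      by_cases haz : a' = 0
      · rwa [← haz]
      · have hz : ∑ m ∈ Finset.univ.erase a', κ a' m * (u a' - u m) = 0 := by
          simp only [mul_sub]
          rw [Finset.sum_sub_distrib, ← Finset.sum_mul, hrow a' haz, sub_self]
        have hterms := (Finset.sum_eq_zero_iff_of_nonneg ?_).mp hz
        · have hca : c' ≠ a' := by
            intro h; rw [h] at hac; rw [hdiag] at hac; exact lt_irrefl 0 hac
          have hcm : c' ∈ Finset.univ.erase a' :=
            Finset.mem_erase.mpr ⟨hca, Finset.mem_univ c'⟩
          have h1 := hterms c' hcm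
          have h2 : u a' - u c' = 0 := by
            rcases mul_eq_zero.mp h1 with h | h
            · exact absurd h (ne_of_gt hac)
            · exact h
          apply ih
          rw [← ha]; linarith
        · intro m hm
          apply mul_nonneg (hκ _ _)
          rw [ha]
          have := hmax m (Finset.mem_univ m)
          linarith
  have h1 : u 0 = u i₀ := claim i₀ (hconn i₀ 0) rfl
  intro v
  calc u v ≤ u i₀ := hmax v (Finset.mem_univ v)
    _ = 0 := by rw [← h1, h0]


end Tree
end Stmt14Aux

open Stmt14Aux

/-- Kirchhoff/Tutte Matrix Tree Theorem formula for the unique solution of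
`xA + b = 0`, where `A`, `b` come from the out-degree Laplacian `L` of a
strongly connected weighted digraph on `{0, 1, …, d}` by deleting row and
column `0`. -/
theorem stmt14 {d : ℕ} (κ : Fin (d + 1) → Fin (d + 1) → ℝ)
    (hκ : ∀ i j, 0 ≤ κ i j) (hdiag : ∀ i, κ i i = 0)
    (hconn : ∀ i j : Fin (d + 1), Relation.ReflTransGen (fun a b => 0 < κ a b) i j)
    (L : Matrix (Fin (d + 1)) (Fin (d + 1)) ℝ)
    (hL : ∀ i j, L i j = if i = j then ∑ ℓ ∈ Finset.univ.erase i, κ i ℓ else -κ i j)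
    (A : Matrix (Fin d) (Fin d) ℝ) (hA : ∀ i j, A i j = -L i.succ j.succ)
    (b : Fin d → ℝ) (hb : ∀ j, b j = -L 0 j.succ) :
    A.det ≠ 0 ∧
    (∀ x : Fin d → ℝ,
      x ᵥ* A + b = 0 ↔ x = fun ℓ => treeSum d κ ℓ.succ / treeSum d κ 0) ∧
    (∀ ℓ : Fin d, 0 < treeSum d κ ℓ.succ / treeSum d κ 0) := by
  classical
  have hcpos : ∀ r, 0 < treeSum d κ r := treeSum_pos κ hκ hconn
  have hc0 : treeSum d κ 0 ≠ 0 := ne_of_gt (hcpos 0)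
  -- the tree vector is in the left kernel of L
  have hker : ∀ jj : Fin (d+1), ∑ ℓ, treeSum d κ ℓ * L ℓ jj = 0 := by
    intro jj
    rw [← Finset.add_sum_erase Finset.univ (fun ℓ => treeSum d κ ℓ * L ℓ jj)
      (Finset.mem_univ jj), hL jj jj, if_pos rfl]
    have h2 : ∑ ℓ ∈ Finset.univ.erase jj, treeSum d κ ℓ * L ℓ jj
        = -∑ ℓ ∈ Finset.univ.erase jj, κ ℓ jj * treeSum d κ ℓ := by
      rw [← Finset.sum_neg_distrib]
      refine Finset.sum_congr rfl fun ℓ hℓ => ?_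
      rw [hL ℓ jj, if_neg (Finset.mem_erase.mp hℓ).1]; ring
    rw [h2, ← kernel_col κ hκ hdiag jj]
    ring
  -- nonsingularity via maximum principle
  have hdet : A.det ≠ 0 := by
    intro hdet0
    obtain ⟨v, hv0, hv⟩ := (Matrix.exists_mulVec_eq_zero_iff).mpr hdet0
    set u : Fin (d+1) → ℝ := Fin.cases 0 v with hu
    have hu0 : u 0 = 0 := rfl
    have husucc : ∀ j : Fin d, u j.succ = v j := fun j => by simp [hu]
    have hrowL : ∀ i : Fin (d+1), i ≠ 0 →
        (∑ m ∈ Finset.univ.erase i, κ i m) * u i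
          = ∑ m ∈ Finset.univ.erase i, κ i m * u m := by
      intro i hi
      obtain ⟨i', rfl⟩ := Fin.exists_succ_eq.mpr hi
      have hAv : ∑ j : Fin d, A i' j * v j = 0 := by
        have := congrFun hv i'
        simpa [Matrix.mulVec, dotProduct] using this
      have hLsum : ∑ m : Fin (d+1), L i'.succ m * u m = 0 := by
        rw [Fin.sum_univ_succ, hu0]
        simp only [mul_zero, zero_add]
        have e : ∀ j : Fin d, L i'.succ j.succ * u j.succ = -(A i' j * v j) :=
          fun j => by rw [hA, husucc]; ring
        rw [Finset.sum_congr rfl (fun j _ => e j), Finset.sum_neg_distrib, hAv, neg_zero]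
      have e1 : L i'.succ i'.succ = ∑ m ∈ Finset.univ.erase i'.succ, κ i'.succ m := by
        rw [hL]; simp
      have e2 : ∑ m ∈ Finset.univ.erase i'.succ, L i'.succ m * u m
          = -∑ m ∈ Finset.univ.erase i'.succ, κ i'.succ m * u m := by
        rw [← Finset.sum_neg_distrib]
        refine Finset.sum_congr rfl fun m hm => ?_
        rw [hL, if_neg (Ne.symm (Finset.mem_erase.mp hm).1)]; ring
      rw [← Finset.add_sum_erase Finset.univ (fun m => L i'.succ m * u m)
        (Finset.mem_univ i'.succ), e1, e2] at hLsum
      linarith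
    have hneg := maxprin κ hκ hdiag hconn u hu0 hrowL
    have hpos' := maxprin κ hκ hdiag hconn (-u) (by simp [hu0]) (by
      intro i hi
      simp only [Pi.neg_apply, mul_neg, Finset.sum_neg_distrib]
      rw [hrowL i hi])
    have huz : ∀ w, u w = 0 := fun w => le_antisymm (hneg w) (by
      have := hpos' w; simp only [Pi.neg_apply] at this; linarith)
    apply hv0
    funext j
    rw [← husucc j, huz]
    simp
  refine ⟨hdet, ?_, fun ℓ => div_pos (hcpos _) (hcpos 0)⟩
  set x₀ : Fin d → ℝ := fun ℓ => treeSum d κ ℓ.succ / treeSum d κ 0 with hx₀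
  have hsol : x₀ ᵥ* A + b = 0 := by
    funext j
    have hk := hker j.succ
    rw [Fin.sum_univ_succ] at hk
    have key : treeSum d κ 0 * (∑ i, x₀ i * A i j + b j) = 0 := by
      rw [mul_add, Finset.mul_sum]
      have e : ∀ i : Fin d, treeSum d κ 0 * (x₀ i * A i j)
          = -(treeSum d κ i.succ * L i.succ j.succ) := by
        intro i; rw [hx₀, hA]; field_simp
      rw [Finset.sum_congr rfl (fun i _ => e i), Finset.sum_neg_distrib, hb j]
      have : treeSum d κ 0 * L 0 j.succ
          + ∑ i : Fin d, treeSum d κ i.succ * L i.succ j.succ = 0 := hk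
      linarith
    have h0 : ∑ i, x₀ i * A i j + b j = 0 := by
      rcases mul_eq_zero.mp key with h | h
      · exact absurd h hc0
      · exact h
    simp only [Pi.add_apply, Pi.zero_apply, Matrix.vecMul, dotProduct]
    exact h0
  intro x
  constructor
  · intro hx
    have h1 : x ᵥ* A = x₀ ᵥ* A := by
      have h := hx.trans hsol.symm
      exact add_right_cancel h
    by_contra hne
    have hsub : (x - x₀) ᵥ* A = 0 := by rw [Matrix.sub_vecMul, h1, sub_self]
    have hdt : Aᵀ.det = 0 := by
      rw [← Matrix.exists_mulVec_eq_zero_iff]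
      exact ⟨x - x₀, sub_ne_zero.mpr hne, by rw [Matrix.mulVec_transpose]; exact hsub⟩
    rw [Matrix.det_transpose] at hdt
    exact hdet hdt
  · intro hx
    rw [hx]
    exact hsol
end
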